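/- arXiv:2203.10758 — 2 statements merged into one kernel-verified Lean document; each statement's English description precedes it below -/
import Mathlib

section
/- Let D ⊆ ℝ² be a bounded open set, T > 0, χ ∈ C^∞(ℝ;[0,1]) with χ(s) = 1 for s ∈ [−1/2, 3/2] and χ(s) = 0 for s ∉ (−1,2), and let γ : [0,T] → [0,∞) be continuous with ∫₀^T γ(t) dt ≥ 2. Define z⁰(x,t) := γ(t) g(x₁) e₁ on ℝ³×[0,T], where g(s) := (d/ds)(χ(s)s) and e₁ = (1,0,0). Then: (i) (z⁰·∇)z⁰ and ∇·z⁰ vanish at every point (x,t) with x₁ ∈ [−1/2,3/2]; (ii) for every x ∈ [0,1]×cl(D), the solution Z of Z'(t) = z⁰(Z(t),t), Z(0) = x, satisfies Z₁(t) > 1 for some t ∈ [0,T]; in particular Z(t) ∉ [0,1]×cl(D) for some t ∈ [0,T]. -/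
open Set MeasureTheory Metric Filter

noncomputable section

/-- Euclidean space `ℝ^N`. -/
abbrev Euc (N : ℕ) : Type := EuclideanSpace ℝ (Fin N)

/-- `i`-th coordinate partial derivative. -/
noncomputable def pd {N : ℕ} {F : Type*} [NormedAddCommGroup F] [NormedSpace ℝ F]
    (i : Fin N) (f : Euc N → F) : Euc N → F :=
  fun x => fderiv ℝ f x (EuclideanSpace.single i 1)

/-- The last two coordinates of a point of `ℝ³`, as a point of `ℝ²`. -/
noncomputable def tail3 (x : Euc 3) : Euc 2 :=
  (EuclideanSpace.equiv (Fin 2) ℝ).symm ![x 1, x 2]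

/-- the explicit return-method field for a cylinder `(0,1) × D ⊆ ℝ³`. -/
theorem statement4
    (D : Set (Euc 2)) (hDo : IsOpen D) (hDb : Bornology.IsBounded D)
    (T : ℝ) (hT : 0 < T)
    (χ : ℝ → ℝ) (hχs : ContDiff ℝ (⊤ : ℕ∞) χ) (hχ01 : ∀ s : ℝ, χ s ∈ Icc (0:ℝ) 1)
    (hχ1 : ∀ s ∈ Icc (-(1/2) : ℝ) (3/2), χ s = 1)
    (hχ0 : ∀ s : ℝ, s ∉ Ioo (-1 : ℝ) 2 → χ s = 0)
    (γ : ℝ → ℝ) (hγc : ContinuousOn γ (Icc 0 T)) (hγ0 : ∀ t ∈ Icc (0:ℝ) T, 0 ≤ γ t)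
    (hγint : 2 ≤ ∫ t in (0:ℝ)..T, γ t)
    (g : ℝ → ℝ) (hg : ∀ s : ℝ, g s = deriv (fun u => χ u * u) s)
    (z0 : Euc 3 → ℝ → Euc 3)
    (hz0 : ∀ (x : Euc 3) (t : ℝ),
      z0 x t = (γ t * g (x 0)) • EuclideanSpace.single (0 : Fin 3) (1:ℝ)) :
    -- (i) (z⁰·∇)z⁰ and ∇·z⁰ vanish wherever x₁ ∈ [−1/2, 3/2]
    (∀ (x : Euc 3), x 0 ∈ Icc (-(1/2) : ℝ) (3/2) → ∀ t ∈ Icc (0:ℝ) T,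
      fderiv ℝ (fun y => z0 y t) x (z0 x t) = 0 ∧
      (∑ i, pd i (fun y => z0 y t) x i) = 0) ∧
    -- (ii) every flow line starting in [0,1] × cl(D) reaches x₁ > 1 before time T
    (∀ (x : Euc 3), x 0 ∈ Icc (0:ℝ) 1 → tail3 x ∈ closure D →
      ∀ Z : ℝ → Euc 3, Z 0 = x → (∀ t ∈ Icc (0:ℝ) T, HasDerivAt Z (z0 (Z t) t) t) →
        (∃ t ∈ Icc (0:ℝ) T, 1 < Z t 0) ∧
        (∃ t ∈ Icc (0:ℝ) T, ¬ (Z t 0 ∈ Icc (0:ℝ) 1 ∧ tail3 (Z t) ∈ closure D))) := by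
  have hχd : Differentiable ℝ χ := hχs.differentiable (by simp)
  have hF : ContDiff ℝ (⊤:ℕ∞) (fun u : ℝ => χ u * u) := hχs.mul contDiff_id
  have hgeq : g = deriv (fun u : ℝ => χ u * u) := funext hg
  have hgsm : ContDiff ℝ (⊤:ℕ∞) g := by
    rw [hgeq]; exact (contDiff_infty_iff_deriv.mp hF).2
  have hgdiff : Differentiable ℝ g := hgsm.differentiable (by simp)
  have hχ'0 : ∀ s ∈ Icc (-(1/2):ℝ) (3/2), deriv χ s = 0 := by
    intro s hs
    apply IsLocalMax.deriv_eq_zero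
    apply Filter.Eventually.of_forall
    intro y
    rw [hχ1 s hs]
    exact (hχ01 y).2
  have hg1 : ∀ s ∈ Icc (-(1/2):ℝ) (3/2), g s = 1 := by
    intro s hs
    rw [hg s, deriv_fun_mul (hχd s) differentiableAt_fun_id, hχ'0 s hs, hχ1 s hs]
    simp
  have hgd0 : ∀ s ∈ Icc (-(1/2):ℝ) (3/2), deriv g s = 0 := by
    intro s hs
    have hu : UniqueDiffWithinAt ℝ (Icc (-(1/2):ℝ) (3/2)) s :=
      (uniqueDiffOn_Icc (by norm_num)) s hs
    rw [← (hgdiff s).derivWithin hu, derivWithin_congr hg1 (hg1 s hs),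
      derivWithin_fun_const, Pi.zero_apply]
  -- the fderiv of z0 vanishes on the slab
  have key : ∀ (x : Euc 3), x 0 ∈ Icc (-(1/2):ℝ) (3/2) → ∀ t : ℝ,
      HasFDerivAt (fun y => z0 y t) (0 : Euc 3 →L[ℝ] Euc 3) x := by
    intro x hx t
    have h1 : HasFDerivAt (fun y : Euc 3 => y 0)
        (EuclideanSpace.proj (0 : Fin 3) : Euc 3 →L[ℝ] ℝ) x := by
      exact (EuclideanSpace.proj (0 : Fin 3) : Euc 3 →L[ℝ] ℝ).hasFDerivAt
    have h2 : HasDerivAt g 0 (x 0) := by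
      have := (hgdiff (x 0)).hasDerivAt
      rwa [hgd0 _ hx] at this
    have h3 := h2.comp_hasFDerivAt x h1
    have h4 := h3.const_mul (γ t)
    have h5 := h4.smul_const (EuclideanSpace.single (0 : Fin 3) (1:ℝ))
    have heq : (fun y : Euc 3 => z0 y t)
        = fun y => (γ t * g (y 0)) • EuclideanSpace.single (0 : Fin 3) (1:ℝ) := by
      funext y; exact hz0 y t
    rw [heq]
    refine h5.congr_fderiv ?_
    ext v
    simp
  constructor
  · -- part (i)
    intro x hx t _
    have h0 := (key x hx t).fderiv
    constructor
    · rw [h0]; rfl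
    · apply Finset.sum_eq_zero
      intro i _
      unfold pd
      rw [h0]
      rfl
  · -- part (ii)
    intro x hx0 _ Z hZ0 hZd
    set φ : ℝ → ℝ := fun t => Z t 0 with hφdef
    have hφ0 : φ 0 = x 0 := by rw [hφdef]; simp [hZ0]
    have hφd : ∀ t ∈ Icc (0:ℝ) T, HasDerivAt φ (γ t * g (φ t)) t := by
      intro t ht
      have h1 := ((EuclideanSpace.proj (0 : Fin 3)
          : Euc 3 →L[ℝ] ℝ).hasFDerivAt).comp_hasDerivAt t (hZd t ht)
      have h2 : (EuclideanSpace.proj (0 : Fin 3) : Euc 3 →L[ℝ] ℝ) (z0 (Z t) t)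
          = γ t * g (Z t 0) := by
        rw [hz0]; simp
      rw [h2] at h1
      exact h1
    have hφc : ContinuousOn φ (Icc 0 T) := fun t ht =>
      ((hφd t ht).continuousAt).continuousWithinAt
    suffices hgoal : ∃ t ∈ Icc (0:ℝ) T, 1 < Z t 0 by
      refine ⟨hgoal, ?_⟩
      obtain ⟨t, ht, h1⟩ := hgoal
      exact ⟨t, ht, fun hc => absurd hc.1.2 (not_le.2 h1)⟩
    by_contra hA
    push_neg at hA
    -- hA : ∀ t ∈ Icc 0 T, Z t 0 ≤ 1
    have hA' : ∀ t ∈ Icc (0:ℝ) T, φ t ≤ 1 := hA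
    -- step A : φ stays above -1/2
    have hlow : ∀ t ∈ Icc (0:ℝ) T, -(1/2) < φ t := by
      by_contra hB
      push_neg at hB
      obtain ⟨t₀, ht₀, ht₀v⟩ := hB
      set B : Set ℝ := Icc 0 T ∩ φ ⁻¹' (Iic (-(1/2))) with hBdef
      have hBne : B.Nonempty := ⟨t₀, ht₀, ht₀v⟩
      have hBc : IsClosed B :=
        hφc.preimage_isClosed_of_isClosed isClosed_Icc isClosed_Iic
      have hBbdd : BddBelow B := ⟨0, fun t ht => ht.1.1⟩
      set u := sInf B with hudef
      have huB : u ∈ B := hBc.csInf_mem hBne hBbdd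
      have huI : u ∈ Icc 0 T := huB.1
      have huφ : φ u ≤ -(1/2) := huB.2
      have hu0 : 0 < u := by
        rcases lt_or_eq_of_le huI.1 with h | h
        · exact h
        · exfalso; rw [← h] at huφ; rw [hφ0] at huφ; linarith [hx0.1]
      have hlt : ∀ s ∈ Ico (0:ℝ) u, -(1/2) < φ s := by
        intro s hs
        by_contra hc
        push_neg at hc
        have hsB : s ∈ B := ⟨⟨hs.1, hs.2.le.trans huI.2⟩, hc⟩
        exact absurd (csInf_le hBbdd hsB) (not_le.2 hs.2)
      have hmono : MonotoneOn φ (Icc 0 u) := by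
        apply monotoneOn_of_deriv_nonneg (convex_Icc _ _)
        · exact hφc.mono (Icc_subset_Icc le_rfl huI.2)
        · intro s hs
          rw [interior_Icc] at hs
          have hsT : s ∈ Icc (0:ℝ) T := ⟨hs.1.le, hs.2.le.trans huI.2⟩
          exact ((hφd s hsT).differentiableAt).differentiableWithinAt
        · intro s hs
          rw [interior_Icc] at hs
          have hsT : s ∈ Icc (0:ℝ) T := ⟨hs.1.le, hs.2.le.trans huI.2⟩
          rw [(hφd s hsT).deriv]
          have hφs : φ s ∈ Icc (-(1/2):ℝ) (3/2) :=
            ⟨(hlt s ⟨hs.1.le, hs.2⟩).le, by linarith [hA' s hsT]⟩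
          rw [hg1 _ hφs]
          simpa using hγ0 s hsT
      have := hmono (left_mem_Icc.2 hu0.le) (right_mem_Icc.2 hu0.le) hu0.le
      rw [hφ0] at this
      linarith [hx0.1]
    -- step B : then φ' = γ on [0,T] and the integral is too big
    have hφd' : ∀ t ∈ uIcc (0:ℝ) T, HasDerivAt φ (γ t) t := by
      intro t ht
      rw [uIcc_of_le hT.le] at ht
      have hφt : φ t ∈ Icc (-(1/2):ℝ) (3/2) :=
        ⟨(hlow t ht).le, by linarith [hA' t ht]⟩
      have := hφd t ht
      rwa [hg1 _ hφt, mul_one] at this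
    have hint : IntervalIntegrable γ volume 0 T := by
      apply ContinuousOn.intervalIntegrable
      rwa [uIcc_of_le hT.le]
    have heq := intervalIntegral.integral_eq_sub_of_hasDerivAt hφd' hint
    have h1 : φ T ≤ 1 := hA' T (right_mem_Icc.2 hT.le)
    have h2 : 0 ≤ φ 0 := by rw [hφ0]; exact hx0.1
    linarith
end
end

section
/- Let ν₁,ν₂ > 0, λ^± := (ν₁±ν₂)/2, T > 0, and let z⁰ ∈ C^∞(cl(E)×[0,T]; ℝ^N), 𝔣 ∈ C^∞(cl(E)×[0,T]; ℝ) bounded, 𝔤^±, μ^± smooth with 𝔤^±(x,t)·n(x) = 0 and μ^±(x,t,z)·n(x) = 0 for all arguments. Suppose v⁺, v⁻ : cl(E)×[0,T]×[0,∞) → ℝ^N are smooth, have x-supports on which |n| = 1, have, for every t, finite weighted norms ‖v^±(·,t,·)‖_{H^{1,1,2}_E} and ‖∂_t v^±(·,t,·)‖_{H^{0,0,0}_E}, bounded locally uniformly in t, and solve: ∂_t v^± − ∂_zz(λ^± v⁺ + λ^∓ v⁻) + [(z⁰·∇)v^± + (v^∓·∇)z⁰]_tan + 𝔣 z ∂_z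 v^± = μ^± on cl(E)×(0,T)×(0,∞); ∂_z v^±(x,t,0) = 𝔤^±(x,t); v^±(x,t,z) → 0 as z → ∞; v^±(x,0,z) = 0. Then v^±(x,t,z)·n(x) = 0 for all (x,t,z) ∈ cl(E)×[0,T]×[0,∞). -/
open Set MeasureTheory Metric Filter

noncomputable section
set_option maxHeartbeats 4000000

/-- Multi-index spatial derivative `∂^β`. -/
noncomputable def mderiv {N : ℕ} {F : Type*} [NormedAddCommGroup F] [NormedSpace ℝ F]
    (β : Fin N → ℕ) (f : Euc N → F) : Euc N → F :=
  (List.finRange N).foldr (fun i g => (pd i)^[β i] g) f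

/-- Multi-indices of total degree at most `m`. -/
def multiIdx (N m : ℕ) : Finset (Fin N → ℕ) :=
  (Fintype.piFinset fun _ : Fin N => Finset.range (m+1)).filter fun β => ∑ i, β i ≤ m

/-- Divergence of a vector field. -/
noncomputable def divg {N : ℕ} (f : Euc N → Euc N) (x : Euc N) : ℝ :=
  ∑ i, pd i f x i

/-- Componentwise Laplacian. -/
noncomputable def vlap {N : ℕ} {F : Type*} [NormedAddCommGroup F] [NormedSpace ℝ F]
    (f : Euc N → F) (x : Euc N) : F :=
  ∑ i, pd i (pd i f) x

/-- Tangential part `v − (v·n)n`. -/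
noncomputable def tangPart {N : ℕ} (n v : Euc N) : Euc N :=
  v - (inner ℝ v n : ℝ) • n

/-- Matrix action on a vector. -/
noncomputable def matVec {N : ℕ} (A : Fin N → Fin N → ℝ) (v : Euc N) : Euc N :=
  (EuclideanSpace.equiv (Fin N) ℝ).symm (fun i => ∑ j, A i j * v j)

/-- `(curl h) × n`, written via `(∇h − (∇h)ᵀ) v`. -/
noncomputable def curlCross {N : ℕ} (h : Euc N → Euc N) (x v : Euc N) : Euc N :=
  (EuclideanSpace.equiv (Fin N) ℝ).symm (fun i => ∑ j, (pd j h x i - pd i h x j) * v j)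

/-- Symmetrized gradient applied to a vector: `D(h)v`. -/
noncomputable def symGradApp {N : ℕ} (h : Euc N → Euc N) (x v : Euc N) : Euc N :=
  (EuclideanSpace.equiv (Fin N) ℝ).symm (fun i => (1/2) * ∑ j, (pd j h x i + pd i h x j) * v j)

/-- Data encoding that `S` is smoothly bounded: a smooth boundary defining function which
agrees with the distance to the boundary on a tubular neighborhood. -/
structure BoundaryData (N : ℕ) (S : Set (Euc N)) where
  d : ℝ
  φ : Euc N → ℝ
  d_pos : 0 < d
  smooth : ContDiff ℝ (⊤ : ℕ∞) φ
  eq_dist : ∀ x ∈ closure S, infDist x (frontier S) < d → φ x = infDist x (frontier S)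
  grad_norm_one : ∀ x : Euc N, infDist x (frontier S) < d → ‖gradient φ x‖ = 1
  mem_iff : ∀ x : Euc N, infDist x (frontier S) < d → (x ∈ S ↔ 0 < φ x)
  frontier_eq : frontier S = {x : Euc N | φ x = 0}
  pos_on : ∀ x ∈ S, 0 < φ x

/-- The outward unit normal, extended to the closure by `n = −∇φ`. -/
noncomputable def BoundaryData.normal {N : ℕ} {S : Set (Euc N)} (bd : BoundaryData N S)
    (x : Euc N) : Euc N :=
  -(gradient bd.φ x)

/-- Integrand of the weighted boundary layer seminorms. -/
noncomputable def wtFn {N : ℕ} {F : Type*} [NormedAddCommGroup F] [NormedSpace ℝ F]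
    (k : ℕ) (β : Fin N → ℕ) (r : ℕ) (f : Euc N → ℝ → F) (x : Euc N) (z : ℝ) : ℝ :=
  (1 + z^(2*k)) * ‖mderiv β (fun y => iteratedDeriv r (fun w => f y w) z) x‖^2

noncomputable def blSemiSq {N : ℕ} {F : Type*} [NormedAddCommGroup F] [NormedSpace ℝ F]
    (E : Set (Euc N)) (k m r : ℕ) (f : Euc N → ℝ → F) : ℝ :=
  ∑ β ∈ multiIdx N m, ∫ x in E, ∫ z in Ioi (0:ℝ), wtFn k β r f x z

/-- Weighted boundary layer norm `H^{k,m,p}_E`. -/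
noncomputable def blNorm {N : ℕ} {F : Type*} [NormedAddCommGroup F] [NormedSpace ℝ F]
    (E : Set (Euc N)) (k m p : ℕ) (f : Euc N → ℝ → F) : ℝ :=
  Real.sqrt (∑ r ∈ Finset.range (p+1), blSemiSq E k m r f)

/-- Finiteness (integrability) of the weighted boundary layer norms. -/
def blFinite {N : ℕ} {F : Type*} [NormedAddCommGroup F] [NormedSpace ℝ F]
    (E : Set (Euc N)) (k m p : ℕ) (f : Euc N → ℝ → F) : Prop :=
  ∀ β ∈ multiIdx N m, ∀ r ≤ p,
    (∀ x : Euc N, IntegrableOn (fun z => wtFn k β r f x z) (Ioi 0)) ∧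
    IntegrableOn (fun x => ∫ z in Ioi (0:ℝ), wtFn k β r f x z) E

/-- Sobolev norm `H^m(E)`. -/
noncomputable def sobNorm {N : ℕ} {F : Type*} [NormedAddCommGroup F] [NormedSpace ℝ F]
    (E : Set (Euc N)) (m : ℕ) (g : Euc N → F) : ℝ :=
  Real.sqrt (∑ β ∈ multiIdx N m, ∫ x in E, ‖mderiv β g x‖^2)

/-- The Navier slip-with-friction boundary operator `𝒩`. -/
noncomputable def NOp {N : ℕ} (n : Euc N → Euc N) (W M L : Euc N → Fin N → Fin N → ℝ)
    (g hp hm : Euc N → Euc N) (x : Euc N) : Euc N :=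
  tangPart (n x)
    (symGradApp g x (n x) + matVec (W x) (g x) + matVec (M x) (hp x) + matVec (L x) (hm x))


section Analysis

/-- FTC-based limit: if `h' = g` everywhere with `g` continuous and integrable on `(0,∞)`,
then `h` tends to `h 0 + ∫_{(0,∞)} g` at `+∞`. -/
lemma limA {h g : ℝ → ℝ} (hder : ∀ z, HasDerivAt h (g z) z) (hcont : Continuous g)
    (hint : IntegrableOn g (Ioi 0)) :
    Tendsto h atTop (nhds (h 0 + ∫ z in Ioi (0:ℝ), g z)) := by
  have key : ∀ Z : ℝ, h Z = h 0 + ∫ z in (0:ℝ)..Z, g z := by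
    intro Z
    rw [intervalIntegral.integral_eq_sub_of_hasDerivAt (fun z _ => hder z)
      (hcont.intervalIntegrable 0 Z)]
    ring
  have := (intervalIntegral_tendsto_integral_Ioi 0 hint tendsto_id)
  have h2 : Tendsto (fun Z => h 0 + ∫ z in (0:ℝ)..Z, g z) atTop
      (nhds (h 0 + ∫ z in Ioi (0:ℝ), g z)) := tendsto_const_nhds.add this
  exact h2.congr (fun Z => (key Z).symm)

/-- A nonnegative integrable function on `(0,∞)` with a limit at `+∞` has limit `0`. -/
lemma limB {g : ℝ → ℝ} {L : ℝ} (hint : IntegrableOn g (Ioi 0))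
    (hnn : ∀ z ∈ Ioi (0:ℝ), 0 ≤ g z) (hlim : Tendsto g atTop (nhds L)) : L = 0 := by
  by_contra hL
  have hL0 : 0 ≤ L := by
    refine ge_of_tendsto hlim ?_
    filter_upwards [eventually_ge_atTop (1:ℝ)] with z hz
    exact hnn z (by simpa using lt_of_lt_of_le one_pos hz)
  have hLpos : 0 < L := lt_of_le_of_ne hL0 (Ne.symm hL)
  obtain ⟨Z₀, hZ₀⟩ := (hlim.eventually (eventually_ge_nhds (half_lt_self hLpos))).exists_forall_of_atTop
  set Z₁ := max Z₀ 1 with hZ₁def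
  have hint' : IntegrableOn g (Ioi Z₁) := hint.mono_set (Ioi_subset_Ioi (by positivity))
  have hconst : Integrable (fun _ : ℝ => L/2) (volume.restrict (Ioi Z₁)) := by
    refine Integrable.mono' hint' aestronglyMeasurable_const ?_
    filter_upwards [ae_restrict_mem measurableSet_Ioi] with z hz
    have : L/2 ≤ g z := hZ₀ z (le_trans (le_max_left _ _) (le_of_lt hz))
    rw [Real.norm_eq_abs, abs_of_pos (half_pos hLpos)]
    exact this
  rw [integrable_const_iff] at hconst
  rcases hconst with h | h
  · exact absurd h (by positivity)
  · have h' := h.measure_univ_lt_top; rw [Measure.restrict_apply_univ, Real.volume_Ioi] at h'; exact absurd h' (by simp)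

lemma limCpos {g : ℝ → ℝ} {I L : ℝ} (hgc : Continuous g)
    (hF : Tendsto (fun Z => ∫ z in (0:ℝ)..Z, g z) atTop (nhds I))
    (hg : Tendsto g atTop (nhds L)) (hLpos : 0 < L) : False := by
  obtain ⟨Z₀, hZ₀⟩ := (hg.eventually (eventually_ge_nhds (half_lt_self hLpos))).exists_forall_of_atTop
  have grow : ∀ Z ≥ Z₀, (∫ z in (0:ℝ)..Z₀, g z) + L/2 * (Z - Z₀) ≤ ∫ z in (0:ℝ)..Z, g z := by
    intro Z hZ
    have hsplit : (∫ z in (0:ℝ)..Z₀, g z) + (∫ z in Z₀..Z, g z) = ∫ z in (0:ℝ)..Z, g z :=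
      intervalIntegral.integral_add_adjacent_intervals (hgc.intervalIntegrable _ _)
        (hgc.intervalIntegrable _ _)
    have hmono : L/2 * (Z - Z₀) ≤ ∫ z in Z₀..Z, g z := by
      have : ∫ z in Z₀..Z, (L/2) ≤ ∫ z in Z₀..Z, g z := by
        refine intervalIntegral.integral_mono_on hZ (intervalIntegrable_const)
          (hgc.intervalIntegrable _ _) ?_
        exact fun z hz => hZ₀ z hz.1
      rw [intervalIntegral.integral_const, smul_eq_mul] at this
      linarith
    linarith
  have htop : Tendsto (fun Z => (∫ z in (0:ℝ)..Z₀, g z) + L/2 * (Z - Z₀)) atTop atTop := by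
    apply tendsto_atTop_add_const_left
    have : Tendsto (fun Z : ℝ => L/2 * Z) atTop atTop :=
      Tendsto.const_mul_atTop (half_pos hLpos) tendsto_id
    have h2 := this.atTop_add (tendsto_const_nhds (x := -(L/2*Z₀)))
    refine h2.congr (fun Z => by ring)
  exact not_tendsto_atTop_of_tendsto_nhds hF
    (tendsto_atTop_mono' _ (eventually_atTop.2 ⟨Z₀, grow⟩) htop)

/-- If `∫_0^Z g` converges as `Z → ∞` and `g` has a limit, the limit is `0`. -/
lemma limC {g : ℝ → ℝ} {I L : ℝ} (hgc : Continuous g)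
    (hF : Tendsto (fun Z => ∫ z in (0:ℝ)..Z, g z) atTop (nhds I))
    (hg : Tendsto g atTop (nhds L)) : L = 0 := by
  by_contra hL
  rcases lt_or_gt_of_ne hL with h | h
  · refine limCpos (g := fun z => -g z) (I := -I) (L := -L) hgc.neg ?_ hg.neg (by linarith)
    simpa [intervalIntegral.integral_neg] using hF.neg
  · exact limCpos hgc hF hg h

section IBP
variable {u : ℝ → ℝ}

lemma sq_le_wt : ∀ z : ℝ, ∀ a : ℝ, a^2 ≤ (1+z^2)*a^2 := fun z a => by nlinarith [sq_nonneg z, sq_nonneg a]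

/-- `∫_{(0,∞)} z·u·u' = −(1/2)∫ u²`, given decay and weighted integrability. -/
lemma ibp2 (hu : ContDiff ℝ (⊤:ℕ∞) u) (hdecay : Tendsto u atTop (nhds 0))
    (h1 : IntegrableOn (fun z => (1+z^2) * (u z)^2) (Ioi 0))
    (h2 : IntegrableOn (fun z => (deriv u z)^2) (Ioi 0)) :
    IntegrableOn (fun z => z * (u z * deriv u z)) (Ioi 0) ∧
      ∫ z in Ioi (0:ℝ), z * (u z * deriv u z) = -(1/2) * ∫ z in Ioi (0:ℝ), (u z)^2 := by
  have hud : Differentiable ℝ u := hu.differentiable (by simp)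
  have hucont : Continuous u := hud.continuous
  have hu'cont : Continuous (deriv u) := hu.continuous_deriv (by exact_mod_cast le_top)
  -- integrability of u^2
  have q1 : IntegrableOn (fun z => (u z)^2) (Ioi 0) := by
    refine h1.mono' ((hucont.pow 2).aestronglyMeasurable) ?_
    filter_upwards [] with z
    rw [Real.norm_eq_abs, abs_of_nonneg (sq_nonneg _)]
    exact sq_le_wt z (u z)
  -- integrability of z * (u * u')  (times 2)
  have q2 : IntegrableOn (fun z => z * (2 * (u z * deriv u z))) (Ioi 0) := by
    refine (h1.add h2).mono' ?_ ?_
    · exact (continuous_id.mul ((continuous_const.mul (hucont.mul hu'cont)))).aestronglyMeasurable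
    · filter_upwards [] with z
      rw [Real.norm_eq_abs]
      have habs : |z * (2 * (u z * deriv u z))| ≤ (z * u z)^2 + (deriv u z)^2 := by
        have := sq_nonneg (z * u z - deriv u z)
        have := sq_nonneg (z * u z + deriv u z)
        rw [abs_le]; constructor <;> nlinarith
      calc |z * (2 * (u z * deriv u z))| ≤ (z*u z)^2 + (deriv u z)^2 := habs
        _ ≤ (1+z^2)*(u z)^2 + (deriv u z)^2 := by nlinarith [sq_nonneg (u z)]
  -- h := z u², h' = u² + z·2uu'
  have hder : ∀ z, HasDerivAt (fun z => z * (u z)^2)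
      ((u z)^2 + z * (2 * (u z * deriv u z))) z := by
    intro z
    have h1d : HasDerivAt (fun z : ℝ => z) 1 z := hasDerivAt_id z
    have h2d : HasDerivAt (fun z => (u z)^2) (2 * u z ^ 1 * deriv u z) z :=
      (hud z).hasDerivAt.pow 2
    have := h1d.mul h2d
    exact this.congr_deriv (by ring)
  have gcont : Continuous (fun z => (u z)^2 + z * (2 * (u z * deriv u z))) := by
    fun_prop
  have hlim := limA hder gcont (q1.add q2)
  have hzero : Tendsto (fun z => z * (u z)^2) atTop
      (nhds ((fun z:ℝ => z * (u z)^2) 0 + ∫ z in Ioi (0:ℝ), ((u z)^2 + z * (2 * (u z * deriv u z))))) := hlim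
  have hInt0 : IntegrableOn (fun z => z * (u z)^2) (Ioi 0) := by
    refine h1.mono' ((continuous_id.mul (hucont.pow 2)).aestronglyMeasurable) ?_
    filter_upwards [ae_restrict_mem measurableSet_Ioi] with z hz
    rw [Real.norm_eq_abs, abs_of_nonneg (mul_nonneg (le_of_lt hz) (sq_nonneg _))]
    nlinarith [sq_nonneg (u z), (show (0:ℝ) < z from hz).le, sq_nonneg (u z * (z-1))]
  have hL := limB hInt0 (fun z hz => mul_nonneg (le_of_lt hz) (sq_nonneg _)) hzero
  simp only [zero_mul, zero_add] at hL
  rw [MeasureTheory.integral_add q1 q2] at hL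
  have hsplit : ∫ z in Ioi (0:ℝ), z * (2 * (u z * deriv u z)) =
      2 * ∫ z in Ioi (0:ℝ), z * (u z * deriv u z) := by
    rw [← MeasureTheory.integral_const_mul]
    congr 1; funext z; ring
  rw [hsplit] at hL
  constructor
  · have : (fun z => z * (u z * deriv u z)) = (fun z => (1/2) * (z * (2 * (u z * deriv u z)))) := by
      funext z; ring
    rw [this]; exact q2.const_mul _
  · linarith

/-- `∫_{(0,∞)} u·u'' = −∫ (u')²`, given `u'(0)=0`, decay and integrability. -/
lemma ibp1 (hu : ContDiff ℝ (⊤:ℕ∞) u) (hbc : deriv u 0 = 0) (hdecay : Tendsto u atTop (nhds 0))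
    (h1 : IntegrableOn (fun z => (1+z^2) * (u z)^2) (Ioi 0))
    (h2 : IntegrableOn (fun z => (deriv u z)^2) (Ioi 0))
    (h3 : IntegrableOn (fun z => (deriv (deriv u) z)^2) (Ioi 0)) :
    IntegrableOn (fun z => u z * deriv (deriv u) z) (Ioi 0) ∧
      ∫ z in Ioi (0:ℝ), u z * deriv (deriv u) z = -∫ z in Ioi (0:ℝ), (deriv u z)^2 := by
  have hud : Differentiable ℝ u := hu.differentiable (by simp)
  have hucont : Continuous u := hud.continuous
  have hu' : ContDiff ℝ (⊤:ℕ∞) (deriv u) := (contDiff_infty_iff_deriv.1 hu).2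
  have hu'd : Differentiable ℝ (deriv u) := hu'.differentiable (by simp)
  have hu'cont : Continuous (deriv u) := hu'd.continuous
  have hu''cont : Continuous (deriv (deriv u)) := hu'.continuous_deriv (by exact_mod_cast le_top)
  have q1 : IntegrableOn (fun z => (u z)^2) (Ioi 0) := by
    refine h1.mono' ((hucont.pow 2).aestronglyMeasurable) ?_
    filter_upwards [] with z
    rw [Real.norm_eq_abs, abs_of_nonneg (sq_nonneg _)]
    exact sq_le_wt z (u z)
  have quu'' : IntegrableOn (fun z => u z * deriv (deriv u) z) (Ioi 0) := by
    refine (q1.add h3).mono' ((hucont.mul hu''cont).aestronglyMeasurable) ?_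
    filter_upwards [] with z
    simp only [Pi.add_apply, Real.norm_eq_abs]
    rw [abs_le]; constructor <;> nlinarith [sq_nonneg (u z - deriv (deriv u) z),
      sq_nonneg (u z + deriv (deriv u) z)]
  have hder : ∀ z, HasDerivAt (fun z => u z * deriv u z)
      ((deriv u z)^2 + u z * deriv (deriv u) z) z := by
    intro z
    have := ((hud z).hasDerivAt).mul ((hu'd z).hasDerivAt)
    exact this.congr_deriv (by ring)
  have gcont : Continuous (fun z => (deriv u z)^2 + u z * deriv (deriv u) z) := by fun_prop
  have hlim := limA hder gcont (h2.add quu'')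
  rw [hbc, mul_zero, zero_add] at hlim
  -- the primitive ∫_0^Z u u' converges since it equals u(Z)²/2 − u(0)²/2
  have hprim : ∀ Z : ℝ, ∫ z in (0:ℝ)..Z, u z * deriv u z = (u Z)^2/2 - (u 0)^2/2 := by
    intro Z
    have hd : ∀ z ∈ uIcc (0:ℝ) Z, HasDerivAt (fun z => (u z)^2/2) (u z * deriv u z) z := by
      intro z _
      have := ((hud z).hasDerivAt).pow 2
      have h' := this.div_const 2
      exact h'.congr_deriv (by ring)
    rw [intervalIntegral.integral_eq_sub_of_hasDerivAt hd
      ((hucont.mul hu'cont).intervalIntegrable 0 Z)]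
  have hFten : Tendsto (fun Z => ∫ z in (0:ℝ)..Z, u z * deriv u z) atTop
      (nhds (0^2/2 - (u 0)^2/2)) := by
    have : Tendsto (fun Z => (u Z)^2/2 - (u 0)^2/2) atTop (nhds (0^2/2 - (u 0)^2/2)) :=
      (((hdecay.pow 2)).div_const 2).sub_const _
    exact this.congr (fun Z => (hprim Z).symm)
  have hL := limC (hucont.mul hu'cont) hFten hlim
  rw [MeasureTheory.integral_add h2 quu''] at hL
  exact ⟨quu'', by linarith⟩
end IBP

section Helpers

lemma mderiv_zero {N : ℕ} {F : Type*} [NormedAddCommGroup F] [NormedSpace ℝ F]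
    (f : Euc N → F) : mderiv (fun _ => 0) f = f := by
  unfold mderiv
  induction (List.finRange N) with
  | nil => rfl
  | cons a l ih => simpa using ih

lemma zero_mem_multiIdx (N m : ℕ) : (fun _ : Fin N => 0) ∈ multiIdx N m := by
  simp [multiIdx, Finset.mem_filter, Fintype.mem_piFinset]

lemma wtFn_zero {N : ℕ} {F : Type*} [NormedAddCommGroup F] [NormedSpace ℝ F]
    (k r : ℕ) (f : Euc N → ℝ → F) (x : Euc N) (z : ℝ) :
    wtFn k (fun _ => 0) r f x z = (1 + z^(2*k)) * ‖iteratedDeriv r (fun w => f x w) z‖^2 := by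
  rw [wtFn, mderiv_zero]

end Helpers

section Slice

variable {X G : Type*} [NormedAddCommGroup X] [NormedSpace ℝ X]
  [NormedAddCommGroup G] [NormedSpace ℝ G] {u : X → ℝ → ℝ → G}

lemma slice_t_smooth (hu : ContDiff ℝ (⊤:ℕ∞) (fun q : X × ℝ × ℝ => u q.1 q.2.1 q.2.2))
    (x : X) (z : ℝ) : ContDiff ℝ (⊤:ℕ∞) (fun t => u x t z) :=
  hu.comp (contDiff_const.prodMk (contDiff_id.prodMk contDiff_const))

lemma slice_z_smooth (hu : ContDiff ℝ (⊤:ℕ∞) (fun q : X × ℝ × ℝ => u q.1 q.2.1 q.2.2))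
    (x : X) (t : ℝ) : ContDiff ℝ (⊤:ℕ∞) (fun z => u x t z) :=
  hu.comp (contDiff_const.prodMk (contDiff_const.prodMk contDiff_id))

lemma hasDerivAt_slice_t (hu : ContDiff ℝ (⊤:ℕ∞) (fun q : X × ℝ × ℝ => u q.1 q.2.1 q.2.2))
    (x : X) (t z : ℝ) :
    HasDerivAt (fun s => u x s z)
      (fderiv ℝ (fun q : X × ℝ × ℝ => u q.1 q.2.1 q.2.2) (x,t,z) ((0:X),(1:ℝ),(0:ℝ))) t := by
  have hF := ((hu.differentiable (by simp)) (x,t,z)).hasFDerivAt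
  have hcurve : HasDerivAt (fun s : ℝ => ((x, s, z) : X × ℝ × ℝ)) ((0:X),(1:ℝ),(0:ℝ)) t :=
    (hasDerivAt_const t x).prodMk ((hasDerivAt_id t).prodMk (hasDerivAt_const t z))
  exact hF.comp_hasDerivAt t hcurve

lemma cont_derivt (hu : ContDiff ℝ (⊤:ℕ∞) (fun q : X × ℝ × ℝ => u q.1 q.2.1 q.2.2)) :
    Continuous (fun q : X × ℝ × ℝ => deriv (fun s => u q.1 s q.2.2) q.2.1) := by
  have heq : (fun q : X × ℝ × ℝ => deriv (fun s => u q.1 s q.2.2) q.2.1)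
      = fun q : X × ℝ × ℝ =>
        fderiv ℝ (fun q : X × ℝ × ℝ => u q.1 q.2.1 q.2.2) q ((0:X),(1:ℝ),(0:ℝ)) := by
    funext q
    have := (hasDerivAt_slice_t hu q.1 q.2.1 q.2.2).deriv
    simpa using this
  rw [heq]
  exact (hu.continuous_fderiv (by simp)).clm_apply continuous_const

end Slice

section Key

lemma key {N : ℕ} {E : Set (Euc N)} (hEo : IsOpen E) {T ν Cf C : ℝ}
    (hν : 0 < ν) (hT : 0 < T) (hCf : 0 ≤ Cf)
    {u : Euc N → ℝ → ℝ → ℝ}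
    (hu : ContDiff ℝ (⊤:ℕ∞) (fun q : Euc N × ℝ × ℝ => u q.1 q.2.1 q.2.2))
    {f : Euc N → ℝ → ℝ}
    (hf : ∀ x ∈ E, ∀ t ∈ Ioo (0:ℝ) T, f x t ≤ Cf)
    (hpde : ∀ x ∈ E, ∀ t ∈ Ioo (0:ℝ) T, ∀ z ∈ Ioi (0:ℝ),
      deriv (fun s => u x s z) t
        = ν * deriv (deriv (fun w => u x t w)) z - f x t * (z * deriv (fun w => u x t w) z))
    (hbc : ∀ x ∈ E, ∀ t ∈ Ioo (0:ℝ) T, deriv (fun w => u x t w) 0 = 0)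
    (hdecay : ∀ x ∈ E, ∀ t ∈ Ioo (0:ℝ) T, Tendsto (fun z => u x t z) atTop (nhds 0))
    (hinit : ∀ x ∈ E, ∀ z ∈ Ioi (0:ℝ), u x 0 z = 0)
    (hI1 : ∀ x ∈ E, ∀ t ∈ Ioo (0:ℝ) T,
      IntegrableOn (fun z => (1+z^2) * (u x t z)^2) (Ioi 0))
    (hI2 : ∀ x ∈ E, ∀ t ∈ Ioo (0:ℝ) T,
      IntegrableOn (fun z => (deriv (fun w => u x t w) z)^2) (Ioi 0))
    (hI3 : ∀ x ∈ E, ∀ t ∈ Ioo (0:ℝ) T,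
      IntegrableOn (fun z => (deriv (deriv (fun w => u x t w)) z)^2) (Ioi 0))
    (hP1 : ∀ t ∈ Icc (0:ℝ) T,
      Integrable (fun p : Euc N × ℝ => (u p.1 t p.2)^2)
        ((volume.restrict E).prod (volume.restrict (Ioi 0))) ∧
      ∫ p : Euc N × ℝ, (u p.1 t p.2)^2
        ∂((volume.restrict E).prod (volume.restrict (Ioi 0))) ≤ C)
    (hP2 : ∀ t ∈ Icc (0:ℝ) T,
      Integrable (fun p : Euc N × ℝ => (deriv (fun s => u p.1 s p.2) t)^2)
        ((volume.restrict E).prod (volume.restrict (Ioi 0))) ∧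
      ∫ p : Euc N × ℝ, (deriv (fun s => u p.1 s p.2) t)^2
        ∂((volume.restrict E).prod (volume.restrict (Ioi 0))) ≤ C) :
    ∀ x ∈ E, ∀ t ∈ Ico (0:ℝ) T, ∀ z ∈ Ioi (0:ℝ), u x t z = 0 := by
  set μ : Measure (Euc N × ℝ) := (volume.restrict E).prod (volume.restrict (Ioi 0)) with hμ
  have hEm : MeasurableSet E := hEo.measurableSet
  have hUcont : Continuous (fun q : Euc N × ℝ × ℝ => u q.1 q.2.1 q.2.2) := hu.continuous
  have hVcont : Continuous (fun q : Euc N × ℝ × ℝ => deriv (fun s => u q.1 s q.2.2) q.2.1) :=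
    cont_derivt hu
  set V : Euc N × ℝ → ℝ → ℝ := fun p s => deriv (fun s' => u p.1 s' p.2) s with hV
  set G : Euc N × ℝ → ℝ → ℝ := fun p s => 2 * u p.1 s p.2 * V p s with hG
  set Φ : ℝ → ℝ := fun t => ∫ p, (u p.1 t p.2)^2 ∂μ with hΦ
  have hGcont : Continuous (fun q : (Euc N × ℝ) × ℝ => G q.1 q.2) := by
    have h1 : Continuous (fun q : (Euc N × ℝ) × ℝ => ((q.1.1, q.2, q.1.2) : Euc N × ℝ × ℝ)) := by
      fun_prop
    exact (continuous_const.mul (hUcont.comp h1)).mul (hVcont.comp h1)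
  have hΦnonneg : ∀ t, 0 ≤ Φ t := fun t => integral_nonneg (fun p => sq_nonneg _)
  have hC0 : 0 ≤ C := le_trans (hΦnonneg 0) (hP1 0 (left_mem_Icc.2 hT.le)).2
  have haemem : ∀ᵐ p ∂μ, p ∈ E ×ˢ Ioi (0:ℝ) := by
    rw [hμ, Measure.prod_restrict]
    exact ae_restrict_mem (hEm.prod measurableSet_Ioi)
  -- pointwise FTC in time
  have hFTC : ∀ x ∈ E, ∀ z ∈ Ioi (0:ℝ), ∀ t ∈ Icc (0:ℝ) T,
      (u x t z)^2 = ∫ s in Ioc (0:ℝ) t, G (x, z) s := by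
    intro x hx z hz t ht
    have hsm := slice_t_smooth hu x z
    have hder : ∀ s : ℝ, HasDerivAt (fun s' => (u x s' z)^2) (G (x,z) s) s := by
      intro s
      have h1 : HasDerivAt (fun s' => u x s' z) (V (x,z) s) s :=
        ((hsm.differentiable (by simp)) s).hasDerivAt
      have h2 := h1.pow 2
      exact h2.congr_deriv (by simp only [hG]; ring)
    have hcont : Continuous (fun s => G (x,z) s) :=
      hGcont.comp (continuous_const.prodMk continuous_id)
    have hFT := intervalIntegral.integral_eq_sub_of_hasDerivAt
      (f := fun s' => (u x s' z)^2) (f' := fun s => G (x,z) s)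
      (fun s _ => hder s) (hcont.intervalIntegrable 0 t)
    rw [intervalIntegral.integral_of_le ht.1] at hFT
    rw [hFT]
    show u x t z ^ 2 = u x t z ^ 2 - u x 0 z ^ 2
    rw [hinit x hx z hz]
    ring
  -- slice integrability of G with uniform bound
  have hGslice : ∀ s ∈ Icc (0:ℝ) T,
      Integrable (fun p => G p s) μ ∧ (∫ p, |G p s| ∂μ) ≤ 2*C := by
    intro s hs
    have hmeas : AEStronglyMeasurable (fun p => G p s) μ :=
      (hGcont.comp (continuous_id.prodMk continuous_const)).aestronglyMeasurable
    have hdom : Integrable (fun p : Euc N × ℝ => (u p.1 s p.2)^2 + (V p s)^2) μ :=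
      (hP1 s hs).1.add (hP2 s hs).1
    have hb : ∀ p : Euc N × ℝ, |G p s| ≤ (u p.1 s p.2)^2 + (V p s)^2 := by
      intro p
      simp only [hG]
      rw [abs_le]
      constructor <;> nlinarith [sq_nonneg (u p.1 s p.2 - V p s), sq_nonneg (u p.1 s p.2 + V p s)]
    have hint : Integrable (fun p => G p s) μ :=
      hdom.mono' hmeas (Filter.Eventually.of_forall
        (fun p => by rw [Real.norm_eq_abs]; exact hb p))
    refine ⟨hint, ?_⟩
    calc (∫ p, |G p s| ∂μ) ≤ ∫ p, ((u p.1 s p.2)^2 + (V p s)^2) ∂μ :=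
          integral_mono hint.abs hdom hb
      _ = (∫ p, (u p.1 s p.2)^2 ∂μ) + ∫ p, (V p s)^2 ∂μ :=
          integral_add (hP1 s hs).1 (hP2 s hs).1
      _ ≤ C + C := add_le_add (hP1 s hs).2 (hP2 s hs).2
      _ = 2*C := by ring
  set Ψ : ℝ → ℝ := fun s => ∫ p, G p s ∂μ with hΨ
  have hΨmeas : StronglyMeasurable Ψ := by
    have h1 : StronglyMeasurable (fun q : ℝ × (Euc N × ℝ) => G q.2 q.1) :=
      (hGcont.comp (continuous_snd.prodMk continuous_fst)).stronglyMeasurable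
    exact h1.integral_prod_right' (ν := μ)
  have hΨbdd : ∀ s ∈ Icc (0:ℝ) T, |Ψ s| ≤ 2*C := by
    intro s hs
    calc |Ψ s| ≤ ∫ p, |G p s| ∂μ := by
          simpa only [Real.norm_eq_abs] using norm_integral_le_integral_norm (fun p => G p s)
      _ ≤ 2*C := (hGslice s hs).2
  have hΨint : ∀ t ∈ Icc (0:ℝ) T, IntegrableOn Ψ (Ioc 0 t) := by
    intro t ht
    haveI : IsFiniteMeasure (volume.restrict (Ioc (0:ℝ) t)) :=
      ⟨by rw [Measure.restrict_apply_univ]; exact measure_Ioc_lt_top⟩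
    refine Integrable.mono' (integrable_const (2*C)) hΨmeas.aestronglyMeasurable ?_
    filter_upwards [ae_restrict_mem measurableSet_Ioc] with s hs
    rw [Real.norm_eq_abs]
    exact hΨbdd s ⟨hs.1.le, hs.2.trans ht.2⟩
  -- Fubini
  have hswap : ∀ t ∈ Icc (0:ℝ) T, Φ t = ∫ s in Ioc (0:ℝ) t, Ψ s := by
    intro t ht
    haveI : IsFiniteMeasure (volume.restrict (Ioc (0:ℝ) t)) :=
      ⟨by rw [Measure.restrict_apply_univ]; exact measure_Ioc_lt_top⟩
    have hmeas2 : AEStronglyMeasurable (fun q : ℝ × (Euc N × ℝ) => G q.2 q.1)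
        ((volume.restrict (Ioc (0:ℝ) t)).prod μ) :=
      (hGcont.comp (continuous_snd.prodMk continuous_fst)).aestronglyMeasurable
    have hprodint : Integrable (fun q : ℝ × (Euc N × ℝ) => G q.2 q.1)
        ((volume.restrict (Ioc (0:ℝ) t)).prod μ) := by
      rw [integrable_prod_iff hmeas2]
      constructor
      · filter_upwards [ae_restrict_mem measurableSet_Ioc] with s hs
        exact (hGslice s ⟨hs.1.le, hs.2.trans ht.2⟩).1
      · refine Integrable.mono' (integrable_const (2*C)) ?_ ?_
        · exact (((hGcont.comp (continuous_snd.prodMk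
            continuous_fst)).norm.stronglyMeasurable.integral_prod_right'
              (ν := μ)).aestronglyMeasurable)
        · filter_upwards [ae_restrict_mem measurableSet_Ioc] with s hs
          rw [Real.norm_eq_abs, abs_of_nonneg (integral_nonneg (fun p => norm_nonneg _))]
          calc (∫ p, ‖G p s‖ ∂μ) = ∫ p, |G p s| ∂μ := rfl
            _ ≤ 2*C := (hGslice s ⟨hs.1.le, hs.2.trans ht.2⟩).2
    have hswap' := MeasureTheory.integral_integral_swap
      (f := fun (s : ℝ) (p : Euc N × ℝ) => G p s) hprodint
    rw [hΦ]
    calc (∫ p, (u p.1 t p.2)^2 ∂μ) = ∫ p, (∫ s in Ioc (0:ℝ) t, G p s) ∂μ := by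
          refine integral_congr_ae ?_
          filter_upwards [haemem] with p hp
          exact hFTC p.1 hp.1 p.2 hp.2 t ht
      _ = ∫ s in Ioc (0:ℝ) t, Ψ s := hswap'.symm
  -- per-slice energy inequality
  have hJ : ∀ s ∈ Ioo (0:ℝ) T, ∀ x ∈ E,
      (∫ z in Ioi (0:ℝ), G (x, z) s) ≤ Cf * ∫ z in Ioi (0:ℝ), (u x s z)^2 := by
    intro s hs x hx
    have hwsm : ContDiff ℝ (⊤:ℕ∞) (fun z => u x s z) := slice_z_smooth hu x s
    have e1 := ibp1 hwsm (hbc x hx s hs) (hdecay x hx s hs) (hI1 x hx s hs)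
      (hI2 x hx s hs) (hI3 x hx s hs)
    have e2 := ibp2 hwsm (hdecay x hx s hs) (hI1 x hx s hs) (hI2 x hx s hs)
    have hcongr : ∀ z ∈ Ioi (0:ℝ),
        G (x,z) s = (2*ν) * (u x s z * deriv (deriv (fun w => u x s w)) z)
          + (-2 * f x s) * (z * (u x s z * deriv (fun w => u x s w) z)) := by
      intro z hz
      have hp := hpde x hx s hs z hz
      simp only [hG, hV]
      rw [hp]
      ring
    have hGint1 : IntegrableOn
        (fun z => (2*ν) * (u x s z * deriv (deriv (fun w => u x s w)) z)) (Ioi 0) :=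
      e1.1.const_mul _
    have hGint2 : IntegrableOn
        (fun z => (-2 * f x s) * (z * (u x s z * deriv (fun w => u x s w) z))) (Ioi 0) :=
      e2.1.const_mul _
    calc (∫ z in Ioi (0:ℝ), G (x, z) s)
        = ∫ z in Ioi (0:ℝ), ((2*ν) * (u x s z * deriv (deriv (fun w => u x s w)) z)
            + (-2 * f x s) * (z * (u x s z * deriv (fun w => u x s w) z))) :=
          setIntegral_congr_fun measurableSet_Ioi (fun z hz => hcongr z hz)
      _ = (2*ν) * (∫ z in Ioi (0:ℝ), u x s z * deriv (deriv (fun w => u x s w)) z)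
          + (-2 * f x s) * ∫ z in Ioi (0:ℝ), z * (u x s z * deriv (fun w => u x s w) z) := by
          rw [integral_add hGint1 hGint2, integral_const_mul, integral_const_mul]
      _ ≤ Cf * ∫ z in Ioi (0:ℝ), (u x s z)^2 := by
          rw [e1.2, e2.2]
          have h1 : 0 ≤ ∫ z in Ioi (0:ℝ), (deriv (fun w => u x s w) z)^2 :=
            integral_nonneg (fun z => sq_nonneg _)
          have h2 : 0 ≤ ∫ z in Ioi (0:ℝ), (u x s z)^2 :=
            integral_nonneg (fun z => sq_nonneg _)
          have h3 := mul_le_mul_of_nonneg_right (hf x hx s hs) h2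
          nlinarith [hν]
  -- Ψ ≤ Cf Φ
  have hΨΦ : ∀ s ∈ Ioo (0:ℝ) T, Ψ s ≤ Cf * Φ s := by
    intro s hs
    have hsIcc : s ∈ Icc (0:ℝ) T := ⟨hs.1.le, hs.2.le⟩
    have hGi := (hGslice s hsIcc).1
    have hui := (hP1 s hsIcc).1
    have hiter : Ψ s = ∫ x in E, (∫ z in Ioi (0:ℝ), G (x,z) s) := by
      rw [hΨ, hμ]
      exact integral_prod _ (by rw [← hμ]; exact hGi)
    have hiter2 : Φ s = ∫ x in E, (∫ z in Ioi (0:ℝ), (u x s z)^2) := by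
      rw [hΦ, hμ]
      exact integral_prod _ (by rw [← hμ]; exact hui)
    rw [hiter, hiter2, ← integral_const_mul]
    refine setIntegral_mono_on ?_ ?_ hEm (fun x hx => hJ s hs x hx)
    · exact hGi.integral_prod_left
    · exact (hui.integral_prod_left).const_mul Cf
  -- Grönwall iteration
  have hgron : ∀ n : ℕ, ∀ t ∈ Ico (0:ℝ) T,
      Φ t ≤ 2*C*T * (Cf^n * t^n / n.factorial) := by
    intro n
    induction n with
    | zero =>
      intro t ht
      have htI : t ∈ Icc (0:ℝ) T := ⟨ht.1, ht.2.le⟩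
      have hb : Φ t ≤ ∫ _s in Ioc (0:ℝ) t, (2*C) := by
        rw [hswap t htI]
        refine setIntegral_mono_on (hΨint t htI) (integrable_const _) measurableSet_Ioc ?_
        intro s hs
        exact le_trans (le_abs_self _) (hΨbdd s ⟨hs.1.le, hs.2.trans ht.2.le⟩)
      rw [setIntegral_const, smul_eq_mul, Real.volume_real_Ioc_of_le ht.1] at hb
      simp only [pow_zero, Nat.factorial_zero, Nat.cast_one]
      have : (t - 0) * (2*C) ≤ T * (2*C) := by
        apply mul_le_mul_of_nonneg_right _ (by linarith)
        linarith [ht.2]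
      calc Φ t ≤ (t-0) * (2*C) := hb
        _ ≤ T * (2*C) := this
        _ = 2*C*T * (1 * 1 / 1) := by ring
    | succ n ih =>
      intro t ht
      have htI : t ∈ Icc (0:ℝ) T := ⟨ht.1, ht.2.le⟩
      have hstep : Φ t ≤ ∫ s in Ioc (0:ℝ) t,
          ((Cf * (2*C*T) * Cf^n / n.factorial) * s^n) := by
        rw [hswap t htI]
        refine setIntegral_mono_on (hΨint t htI)
          ((continuous_const.mul (continuous_pow n)).integrableOn_Ioc) measurableSet_Ioc ?_
        intro s hs
        have hsI : s ∈ Ioo (0:ℝ) T := ⟨hs.1, lt_of_le_of_lt hs.2 ht.2⟩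
        refine le_trans (hΨΦ s hsI) ?_
        have := mul_le_mul_of_nonneg_left (ih s ⟨hs.1.le, hsI.2⟩) hCf
        calc Cf * Φ s ≤ Cf * (2*C*T * (Cf^n * s^n / n.factorial)) := this
          _ = (Cf * (2*C*T) * Cf^n / n.factorial) * s^n := by ring
      have hpow : ∫ s in Ioc (0:ℝ) t, s^n = (t^(n+1) - 0^(n+1)) / (n+1) := by
        rw [← intervalIntegral.integral_of_le ht.1, integral_pow]
      rw [integral_const_mul, hpow] at hstep
      refine le_trans hstep (le_of_eq ?_)
      rw [Nat.factorial_succ]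
      have hfac : (0:ℝ) < n.factorial := by exact_mod_cast n.factorial_pos
      push_cast
      field_simp
      ring
  -- Φ vanishes
  have hΦzero : ∀ t ∈ Ico (0:ℝ) T, Φ t = 0 := by
    intro t ht
    have htend : Tendsto (fun n : ℕ => 2*C*T * ((Cf*t)^n / n.factorial)) atTop (nhds 0) := by
      have h0 := FloorSemiring.tendsto_pow_div_factorial_atTop (K := ℝ) (Cf*t)
      simpa using h0.const_mul (2*C*T)
    have hle : ∀ n : ℕ, Φ t ≤ 2*C*T * ((Cf*t)^n / n.factorial) := by
      intro n
      have := hgron n t ht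
      rw [mul_pow]
      exact this
    have hfin := ge_of_tendsto htend (Filter.Eventually.of_forall hle)
    exact le_antisymm hfin (hΦnonneg t)
  -- conclude pointwise vanishing
  intro x hx t ht z hz
  by_contra hne
  have htI : t ∈ Icc (0:ℝ) T := ⟨ht.1, ht.2.le⟩
  have hzero : (∫ p, (u p.1 t p.2)^2 ∂μ) = 0 := hΦzero t ht
  have hae : (fun p : Euc N × ℝ => (u p.1 t p.2)^2) =ᵐ[μ] 0 :=
    (integral_eq_zero_iff_of_nonneg_ae
      (Filter.Eventually.of_forall (fun p => sq_nonneg _)) (hP1 t htI).1).1 hzero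
  have hnull : μ {p : Euc N × ℝ | (u p.1 t p.2)^2 ≠ 0} = 0 := by
    have h1 := hae
    rw [Filter.EventuallyEq, ae_iff] at h1
    simpa using h1
  have hcont : Continuous (fun p : Euc N × ℝ => u p.1 t p.2) :=
    hUcont.comp (by fun_prop : Continuous fun p : Euc N × ℝ => ((p.1, t, p.2) : Euc N × ℝ × ℝ))
  have hWopen : IsOpen ({p : Euc N × ℝ | u p.1 t p.2 ≠ 0} ∩ (E ×ˢ Ioi 0)) :=
    (isOpen_ne_fun hcont continuous_const).inter (hEo.prod isOpen_Ioi)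
  have hWne : ({p : Euc N × ℝ | u p.1 t p.2 ≠ 0} ∩ (E ×ˢ Ioi 0)).Nonempty :=
    ⟨(x,z), hne, hx, hz⟩
  have hWpos : 0 < μ ({p : Euc N × ℝ | u p.1 t p.2 ≠ 0} ∩ (E ×ˢ Ioi 0)) := by
    rw [hμ, Measure.prod_restrict, Measure.restrict_apply hWopen.measurableSet,
      inter_eq_self_of_subset_left inter_subset_right]
    exact hWopen.measure_pos _ hWne
  have hsub : ({p : Euc N × ℝ | u p.1 t p.2 ≠ 0} ∩ (E ×ˢ Ioi 0))
      ⊆ {p : Euc N × ℝ | (u p.1 t p.2)^2 ≠ 0} := fun p hp => pow_ne_zero _ hp.1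
  exact absurd (le_trans (measure_mono hsub) hnull.le) (not_le.2 hWpos)

end Key

section ProdHelper

/-- Build product integrability from iterated integrability for nonnegative kernels. -/
lemma prod_of_iterated {N : ℕ} {E : Set (Euc N)}
    {W : Euc N → ℝ → ℝ}
    (hWc : Continuous (fun p : Euc N × ℝ => W p.1 p.2))
    (hWx : ∀ x, IntegrableOn (fun z => W x z) (Ioi 0))
    (hWE : IntegrableOn (fun x => ∫ z in Ioi (0:ℝ), W x z) E)
    (hWnn : ∀ x z, 0 ≤ W x z) :
    Integrable (fun p : Euc N × ℝ => W p.1 p.2)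
      ((volume.restrict E).prod (volume.restrict (Ioi 0))) ∧
    ∫ p : Euc N × ℝ, W p.1 p.2 ∂((volume.restrict E).prod (volume.restrict (Ioi 0)))
      = ∫ x in E, ∫ z in Ioi (0:ℝ), W x z := by
  have hint : Integrable (fun p : Euc N × ℝ => W p.1 p.2)
      ((volume.restrict E).prod (volume.restrict (Ioi 0))) := by
    rw [integrable_prod_iff hWc.aestronglyMeasurable]
    constructor
    · exact Filter.Eventually.of_forall (fun x => hWx x)
    · refine hWE.congr (Filter.Eventually.of_forall (fun x => ?_))
      refine integral_congr_ae (Filter.Eventually.of_forall (fun z => ?_))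
      show W x z = ‖W x z‖
      rw [Real.norm_eq_abs, abs_of_nonneg (hWnn x z)]
  exact ⟨hint, integral_prod _ hint⟩

end ProdHelper

end Analysis

/-- orthogonality of the boundary layer profiles, Lemma `wellpvpmctrl`:
the profiles `v^±` solving the coupled boundary layer system are orthogonal to the
extended normal. Here `λ⁺ = (ν₁+ν₂)/2` and `λ⁻ = (ν₁−ν₂)/2`. -/
theorem statement8
    (N : ℕ) (hN : N = 2 ∨ N = 3)
    (E : Set (Euc N)) (hEo : IsOpen E) (hEc : IsConnected E) (hEb : Bornology.IsBounded E)
    (bd : BoundaryData N E)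
    (ν₁ ν₂ : ℝ) (hν₁ : 0 < ν₁) (hν₂ : 0 < ν₂) (T : ℝ) (hT : 0 < T)
    (z0 : Euc N → ℝ → Euc N)
    (hz0s : ContDiff ℝ (⊤ : ℕ∞) fun q : Euc N × ℝ => z0 q.1 q.2)
    (f : Euc N → ℝ → ℝ)
    (hfs : ContDiff ℝ (⊤ : ℕ∞) fun q : Euc N × ℝ => f q.1 q.2)
    (hfb : ∃ Cf : ℝ, ∀ x ∈ closure E, ∀ t ∈ Icc (0:ℝ) T, |f x t| ≤ Cf)
    (gp gm : Euc N → ℝ → Euc N)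
    (hgps : ContDiff ℝ (⊤ : ℕ∞) fun q : Euc N × ℝ => gp q.1 q.2)
    (hgms : ContDiff ℝ (⊤ : ℕ∞) fun q : Euc N × ℝ => gm q.1 q.2)
    (hgptan : ∀ (x : Euc N) (t : ℝ), (inner ℝ (gp x t) (bd.normal x) : ℝ) = 0)
    (hgmtan : ∀ (x : Euc N) (t : ℝ), (inner ℝ (gm x t) (bd.normal x) : ℝ) = 0)
    (μp μm : Euc N → ℝ → ℝ → Euc N)
    (hμps : ContDiff ℝ (⊤ : ℕ∞) fun q : Euc N × ℝ × ℝ => μp q.1 q.2.1 q.2.2)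
    (hμms : ContDiff ℝ (⊤ : ℕ∞) fun q : Euc N × ℝ × ℝ => μm q.1 q.2.1 q.2.2)
    (hμptan : ∀ (x : Euc N) (t z : ℝ), (inner ℝ (μp x t z) (bd.normal x) : ℝ) = 0)
    (hμmtan : ∀ (x : Euc N) (t z : ℝ), (inner ℝ (μm x t z) (bd.normal x) : ℝ) = 0)
    (vp vm : Euc N → ℝ → ℝ → Euc N)
    (hvps : ContDiff ℝ (⊤ : ℕ∞) fun q : Euc N × ℝ × ℝ => vp q.1 q.2.1 q.2.2)
    (hvms : ContDiff ℝ (⊤ : ℕ∞) fun q : Euc N × ℝ × ℝ => vm q.1 q.2.1 q.2.2)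
    -- on the x-supports of v^± the extended normal is unitary
    (hsupp : ∀ x : Euc N, (∃ t z : ℝ, vp x t z ≠ 0 ∨ vm x t z ≠ 0) → ‖bd.normal x‖ = 1)
    -- finite weighted norms, bounded (locally) uniformly in t
    (hvfin : ∃ CV : ℝ, ∀ t ∈ Icc (0:ℝ) T,
      blFinite E 1 1 2 (fun x z => vp x t z) ∧ blNorm E 1 1 2 (fun x z => vp x t z) ≤ CV ∧
      blFinite E 1 1 2 (fun x z => vm x t z) ∧ blNorm E 1 1 2 (fun x z => vm x t z) ≤ CV ∧
      blFinite E 0 0 0 (fun x z => deriv (fun s => vp x s z) t) ∧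
      blNorm E 0 0 0 (fun x z => deriv (fun s => vp x s z) t) ≤ CV ∧
      blFinite E 0 0 0 (fun x z => deriv (fun s => vm x s z) t) ∧
      blNorm E 0 0 0 (fun x z => deriv (fun s => vm x s z) t) ≤ CV)
    -- the coupled boundary layer system on cl(E) × (0,T) × (0,∞)
    (hpdep : ∀ x ∈ closure E, ∀ t ∈ Ioo (0:ℝ) T, ∀ z ∈ Ioi (0:ℝ),
      deriv (fun s => vp x s z) t
        - iteratedDeriv 2 (fun w => ((ν₁+ν₂)/2) • vp x t w + ((ν₁-ν₂)/2) • vm x t w) z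
        + tangPart (bd.normal x)
            (fderiv ℝ (fun y => vp y t z) x (z0 x t)
              + fderiv ℝ (fun y => z0 y t) x (vm x t z))
        + (f x t * z) • deriv (fun w => vp x t w) z = μp x t z)
    (hpdem : ∀ x ∈ closure E, ∀ t ∈ Ioo (0:ℝ) T, ∀ z ∈ Ioi (0:ℝ),
      deriv (fun s => vm x s z) t
        - iteratedDeriv 2 (fun w => ((ν₁-ν₂)/2) • vp x t w + ((ν₁+ν₂)/2) • vm x t w) z
        + tangPart (bd.normal x)
            (fderiv ℝ (fun y => vm y t z) x (z0 x t)
              + fderiv ℝ (fun y => z0 y t) x (vp x t z))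
        + (f x t * z) • deriv (fun w => vm x t w) z = μm x t z)
    -- Neumann boundary conditions at z = 0
    (hbcp : ∀ x ∈ closure E, ∀ t ∈ Icc (0:ℝ) T, deriv (fun w => vp x t w) 0 = gp x t)
    (hbcm : ∀ x ∈ closure E, ∀ t ∈ Icc (0:ℝ) T, deriv (fun w => vm x t w) 0 = gm x t)
    -- decay as z → ∞
    (hdecayp : ∀ x ∈ closure E, ∀ t ∈ Icc (0:ℝ) T,
      Tendsto (fun z => vp x t z) atTop (nhds 0))
    (hdecaym : ∀ x ∈ closure E, ∀ t ∈ Icc (0:ℝ) T,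
      Tendsto (fun z => vm x t z) atTop (nhds 0))
    -- zero initial conditions
    (hinitp : ∀ x ∈ closure E, ∀ z ∈ Ici (0:ℝ), vp x 0 z = 0)
    (hinitm : ∀ x ∈ closure E, ∀ z ∈ Ici (0:ℝ), vm x 0 z = 0) :
    ∀ x ∈ closure E, ∀ t ∈ Icc (0:ℝ) T, ∀ z ∈ Ici (0:ℝ),
      (inner ℝ (vp x t z) (bd.normal x) : ℝ) = 0 ∧
      (inner ℝ (vm x t z) (bd.normal x) : ℝ) = 0 := by
  classical
  obtain ⟨Cf₀, hCf₀⟩ := hfb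
  obtain ⟨CV, hCV⟩ := hvfin
  -- smoothness of the extended normal
  have hnsm : ContDiff ℝ (⊤:ℕ∞) bd.normal := by
    have h1 : ContDiff ℝ (⊤:ℕ∞) (fun x => fderiv ℝ bd.φ x) :=
      bd.smooth.fderiv_right (by exact_mod_cast le_top)
    have h2 : ContDiff ℝ (⊤:ℕ∞) (gradient bd.φ) :=
      (InnerProductSpace.toDual ℝ (Euc N)).symm.contDiff.comp h1
    exact h2.neg
  have hnsm' : ContDiff ℝ (⊤:ℕ∞) (fun q : Euc N × ℝ × ℝ => bd.normal q.1) :=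
    hnsm.comp contDiff_fst
  -- dichotomy: either the normal is unitary at x, or both profiles vanish identically at x
  have hcase : ∀ x : Euc N, ‖bd.normal x‖ = 1 ∨ (∀ t z : ℝ, vp x t z = 0 ∧ vm x t z = 0) := by
    intro x
    by_cases h : ∃ t z : ℝ, vp x t z ≠ 0 ∨ vm x t z ≠ 0
    · exact Or.inl (hsupp x h)
    · push_neg at h
      exact Or.inr h
  have hCV0 : 0 ≤ CV :=
    le_trans (Real.sqrt_nonneg _) (hCV 0 (left_mem_Icc.2 hT.le)).2.1
  -- extract weighted-norm bounds: the β = 0 term of the r-th seminorm is ≤ CV^2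
  have hblock : ∀ (v : Euc N → ℝ → Euc N) (r : ℕ), r ≤ 2 → blNorm E 1 1 2 v ≤ CV →
      ∫ x in E, ∫ z in Ioi (0:ℝ), wtFn 1 (fun _ => 0) r v x z ≤ CV^2 := by
    intro v r hr hle
    have hnn : ∀ k m r' (g : Euc N → ℝ → Euc N), 0 ≤ blSemiSq E k m r' g := by
      intro k m r' g
      refine Finset.sum_nonneg (fun β _ => ?_)
      refine integral_nonneg (fun x => ?_)
      refine integral_nonneg (fun z => ?_)
      have h0 : (0:ℝ) ≤ 1 + z^(2*k) := by
        have : (0:ℝ) ≤ z^(2*k) := by rw [pow_mul]; positivity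
        linarith
      exact mul_nonneg h0 (sq_nonneg _)
    have hS : ∑ r' ∈ Finset.range 3, blSemiSq E 1 1 r' v ≤ CV^2 := by
      have hSnn : 0 ≤ ∑ r' ∈ Finset.range 3, blSemiSq E 1 1 r' v :=
        Finset.sum_nonneg (fun r' _ => hnn 1 1 r' v)
      have h1 : ∑ r' ∈ Finset.range 3, blSemiSq E 1 1 r' v
          = (blNorm E 1 1 2 v)^2 := by
        rw [blNorm, Real.sq_sqrt hSnn]
      rw [h1]
      exact pow_le_pow_left₀ (Real.sqrt_nonneg _) hle 2
    have h2 : blSemiSq E 1 1 r v ≤ ∑ r' ∈ Finset.range 3, blSemiSq E 1 1 r' v :=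
      Finset.single_le_sum (f := fun r' => blSemiSq E 1 1 r' v)
        (fun r' _ => hnn 1 1 r' v) (Finset.mem_range.2 (by omega))
    have h3 : ∫ x in E, ∫ z in Ioi (0:ℝ), wtFn 1 (fun _ => 0) r v x z
        ≤ blSemiSq E 1 1 r v := by
      unfold blSemiSq
      refine Finset.single_le_sum
        (f := fun β => ∫ x in E, ∫ z in Ioi (0:ℝ), wtFn 1 β r v x z)
        (fun β _ => ?_) (zero_mem_multiIdx N 1)
      refine integral_nonneg (fun x => ?_)
      refine integral_nonneg (fun z => ?_)
      have h0 : (0:ℝ) ≤ 1 + z^(2*1) := by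
        have : (0:ℝ) ≤ z^(2*1) := by rw [pow_mul]; positivity
        linarith
      exact mul_nonneg h0 (sq_nonneg _)
    linarith
  have hblock0 : ∀ (g : Euc N → ℝ → Euc N), blNorm E 0 0 0 g ≤ CV →
      ∫ x in E, ∫ z in Ioi (0:ℝ), wtFn 0 (fun _ => 0) 0 g x z ≤ CV^2 := by
    intro g hle
    have hnn : ∀ β, 0 ≤ ∫ x in E, ∫ z in Ioi (0:ℝ), wtFn 0 β 0 g x z := by
      intro β
      refine integral_nonneg (fun x => integral_nonneg (fun z => ?_))
      have h0 : (0:ℝ) ≤ 1 + z^(2*0) := by norm_num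
      exact mul_nonneg h0 (sq_nonneg _)
    have hSnn : 0 ≤ blSemiSq E 0 0 0 g := Finset.sum_nonneg (fun β _ => hnn β)
    have h1 : blSemiSq E 0 0 0 g ≤ CV^2 := by
      have hsum : ∑ r' ∈ Finset.range 1, blSemiSq E 0 0 r' g = blSemiSq E 0 0 0 g := by
        simp
      have h2 : blNorm E 0 0 0 g = Real.sqrt (blSemiSq E 0 0 0 g) := by
        rw [blNorm, hsum]
      have hle' : Real.sqrt (blSemiSq E 0 0 0 g) ≤ CV := by
        rw [← h2]; exact hle
      calc blSemiSq E 0 0 0 g = (Real.sqrt (blSemiSq E 0 0 0 g))^2 :=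
            (Real.sq_sqrt hSnn).symm
        _ ≤ CV^2 := pow_le_pow_left₀ (Real.sqrt_nonneg _) hle' 2
    have h4 : ∫ x in E, ∫ z in Ioi (0:ℝ), wtFn 0 (fun _ => 0) 0 g x z
        ≤ blSemiSq E 0 0 0 g := by
      unfold blSemiSq
      exact Finset.single_le_sum
        (f := fun β => ∫ x in E, ∫ z in Ioi (0:ℝ), wtFn 0 β 0 g x z)
        (fun β _ => hnn β) (zero_mem_multiIdx N 0)
    linarith
  have hdiffz : ∀ (v : Euc N → ℝ → ℝ → Euc N),
      ContDiff ℝ (⊤:ℕ∞) (fun q : Euc N × ℝ × ℝ => v q.1 q.2.1 q.2.2) →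
      ∀ x t, Differentiable ℝ (deriv (fun w => v x t w)) := by
    intro v hv x t
    exact (contDiff_infty_iff_deriv.1 (slice_z_smooth hv x t)).2.differentiable
      (by simp)
  -- the core argument, for u = ⟪vp,n⟫ + σ⟪vm,n⟫ with σ = ±1
  have main : ∀ σ : ℝ, σ = 1 ∨ σ = -1 →
      ∀ x ∈ E, ∀ t ∈ Ico (0:ℝ) T, ∀ z ∈ Ioi (0:ℝ),
        (inner ℝ (vp x t z) (bd.normal x) : ℝ)
          + σ * (inner ℝ (vm x t z) (bd.normal x) : ℝ) = 0 := by
    intro σ hσ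
    have hσ2 : σ^2 = 1 := by rcases hσ with h|h <;> rw [h] <;> ring
    have hσabs : |σ| = 1 := by rcases hσ with h|h <;> rw [h] <;> simp
    have hνpos : 0 < (ν₁+ν₂)/2 + σ*((ν₁-ν₂)/2) := by
      rcases hσ with h|h <;> rw [h] <;> linarith
    -- smoothness of u
    have hUsm : ContDiff ℝ (⊤:ℕ∞) (fun q : Euc N × ℝ × ℝ =>
        (inner ℝ (vp q.1 q.2.1 q.2.2) (bd.normal q.1) : ℝ)
          + σ * (inner ℝ (vm q.1 q.2.1 q.2.2) (bd.normal q.1) : ℝ)) :=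
      (hvps.inner ℝ hnsm').add (contDiff_const.mul (hvms.inner ℝ hnsm'))
    -- t-derivative exchange
    have hUt : ∀ x t z, deriv (fun s => (inner ℝ (vp x s z) (bd.normal x) : ℝ)
          + σ * (inner ℝ (vm x s z) (bd.normal x) : ℝ)) t
        = (inner ℝ (deriv (fun s => vp x s z) t) (bd.normal x) : ℝ)
          + σ * (inner ℝ (deriv (fun s => vm x s z) t) (bd.normal x) : ℝ) := by
      intro x t z
      have hp : HasDerivAt (fun s => vp x s z) (deriv (fun s => vp x s z) t) t :=
        (((slice_t_smooth hvps x z).differentiable (by simp)) t).hasDerivAt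
      have hm : HasDerivAt (fun s => vm x s z) (deriv (fun s => vm x s z) t) t :=
        (((slice_t_smooth hvms x z).differentiable (by simp)) t).hasDerivAt
      have h1 := HasDerivAt.inner ℝ hp (hasDerivAt_const t (bd.normal x))
      have h2 := HasDerivAt.inner ℝ hm (hasDerivAt_const t (bd.normal x))
      have h3 := h1.add (h2.const_mul σ)
      simp only [inner_zero_right, zero_add] at h3
      exact h3.deriv
    -- z-derivative exchange (function level)
    have hUz' : ∀ x t, deriv (fun w => (inner ℝ (vp x t w) (bd.normal x) : ℝ)
          + σ * (inner ℝ (vm x t w) (bd.normal x) : ℝ))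
        = fun z => (inner ℝ (deriv (fun w => vp x t w) z) (bd.normal x) : ℝ)
          + σ * (inner ℝ (deriv (fun w => vm x t w) z) (bd.normal x) : ℝ) := by
      intro x t
      funext z
      have hp : HasDerivAt (fun w => vp x t w) (deriv (fun w => vp x t w) z) z :=
        (((slice_z_smooth hvps x t).differentiable (by simp)) z).hasDerivAt
      have hm : HasDerivAt (fun w => vm x t w) (deriv (fun w => vm x t w) z) z :=
        (((slice_z_smooth hvms x t).differentiable (by simp)) z).hasDerivAt
      have h1 := HasDerivAt.inner ℝ hp (hasDerivAt_const z (bd.normal x))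
      have h2 := HasDerivAt.inner ℝ hm (hasDerivAt_const z (bd.normal x))
      have h3 := h1.add (h2.const_mul σ)
      simp only [inner_zero_right, zero_add] at h3
      exact h3.deriv
    -- second z-derivative exchange
    have hUzz : ∀ x t z, deriv (deriv (fun w => (inner ℝ (vp x t w) (bd.normal x) : ℝ)
          + σ * (inner ℝ (vm x t w) (bd.normal x) : ℝ))) z
        = (inner ℝ (deriv (deriv (fun w => vp x t w)) z) (bd.normal x) : ℝ)
          + σ * (inner ℝ (deriv (deriv (fun w => vm x t w)) z) (bd.normal x) : ℝ) := by
      intro x t z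
      rw [hUz' x t]
      have hp : HasDerivAt (deriv (fun w => vp x t w))
          (deriv (deriv (fun w => vp x t w)) z) z := ((hdiffz vp hvps x t) z).hasDerivAt
      have hm : HasDerivAt (deriv (fun w => vm x t w))
          (deriv (deriv (fun w => vm x t w)) z) z := ((hdiffz vm hvms x t) z).hasDerivAt
      have h1 := HasDerivAt.inner ℝ hp (hasDerivAt_const z (bd.normal x))
      have h2 := HasDerivAt.inner ℝ hm (hasDerivAt_const z (bd.normal x))
      have h3 := h1.add (h2.const_mul σ)
      simp only [inner_zero_right, zero_add] at h3
      exact h3.deriv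
    -- pointwise bounds
    have habs : ∀ x t z, |(inner ℝ (vp x t z) (bd.normal x) : ℝ)
          + σ * (inner ℝ (vm x t z) (bd.normal x) : ℝ)|
        ≤ ‖vp x t z‖ + ‖vm x t z‖ := by
      intro x t z
      rcases hcase x with hn1 | hzero
      · have h1 := abs_real_inner_le_norm (vp x t z) (bd.normal x)
        have h2 := abs_real_inner_le_norm (vm x t z) (bd.normal x)
        rw [hn1, mul_one] at h1 h2
        calc _ ≤ |(inner ℝ (vp x t z) (bd.normal x) : ℝ)|
              + |σ * (inner ℝ (vm x t z) (bd.normal x) : ℝ)| := abs_add_le _ _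
          _ = |(inner ℝ (vp x t z) (bd.normal x) : ℝ)|
              + |(inner ℝ (vm x t z) (bd.normal x) : ℝ)| := by rw [abs_mul, hσabs, one_mul]
          _ ≤ ‖vp x t z‖ + ‖vm x t z‖ := add_le_add h1 h2
      · rw [(hzero t z).1, (hzero t z).2]
        simp
    have hinner_bound : ∀ (x : Euc N) (wp wm : Euc N), ‖bd.normal x‖ = 1 →
        |(inner ℝ wp (bd.normal x) : ℝ) + σ * (inner ℝ wm (bd.normal x) : ℝ)| ≤ ‖wp‖ + ‖wm‖ := by
      intro x wp wm hn1
      have h1 := abs_real_inner_le_norm wp (bd.normal x)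
      have h2 := abs_real_inner_le_norm wm (bd.normal x)
      rw [hn1, mul_one] at h1 h2
      calc _ ≤ |(inner ℝ wp (bd.normal x) : ℝ)| + |σ * (inner ℝ wm (bd.normal x) : ℝ)| := abs_add_le _ _
        _ = |(inner ℝ wp (bd.normal x) : ℝ)| + |(inner ℝ wm (bd.normal x) : ℝ)| := by
            rw [abs_mul, hσabs, one_mul]
        _ ≤ ‖wp‖ + ‖wm‖ := add_le_add h1 h2
    have habs_t : ∀ x t z, |deriv (fun s => (inner ℝ (vp x s z) (bd.normal x) : ℝ)
          + σ * (inner ℝ (vm x s z) (bd.normal x) : ℝ)) t|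
        ≤ ‖deriv (fun s => vp x s z) t‖ + ‖deriv (fun s => vm x s z) t‖ := by
      intro x t z
      rw [hUt x t z]
      rcases hcase x with hn1 | hzero
      · exact hinner_bound x _ _ hn1
      · have e1 : (fun s => vp x s z) = fun _ => (0:Euc N) := funext fun s => (hzero s z).1
        have e2 : (fun s => vm x s z) = fun _ => (0:Euc N) := funext fun s => (hzero s z).2
        rw [e1, e2]
        simp
    have habs_z : ∀ x t z, |deriv (fun w => (inner ℝ (vp x t w) (bd.normal x) : ℝ)
          + σ * (inner ℝ (vm x t w) (bd.normal x) : ℝ)) z|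
        ≤ ‖deriv (fun w => vp x t w) z‖ + ‖deriv (fun w => vm x t w) z‖ := by
      intro x t z
      rw [hUz' x t]
      rcases hcase x with hn1 | hzero
      · exact hinner_bound x _ _ hn1
      · have e1 : (fun w => vp x t w) = fun _ => (0:Euc N) := funext fun w => (hzero t w).1
        have e2 : (fun w => vm x t w) = fun _ => (0:Euc N) := funext fun w => (hzero t w).2
        rw [e1, e2]
        simp
    have habs_zz : ∀ x t z, |deriv (deriv (fun w => (inner ℝ (vp x t w) (bd.normal x) : ℝ)
          + σ * (inner ℝ (vm x t w) (bd.normal x) : ℝ))) z|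
        ≤ ‖deriv (deriv (fun w => vp x t w)) z‖ + ‖deriv (deriv (fun w => vm x t w)) z‖ := by
      intro x t z
      rw [hUzz x t z]
      rcases hcase x with hn1 | hzero
      · exact hinner_bound x _ _ hn1
      · have e1 : (fun w => vp x t w) = fun _ => (0:Euc N) := funext fun w => (hzero t w).1
        have e2 : (fun w => vm x t w) = fun _ => (0:Euc N) := funext fun w => (hzero t w).2
        rw [e1, e2]
        simp
    have hIcc : ∀ {t : ℝ}, t ∈ Ioo (0:ℝ) T → t ∈ Icc (0:ℝ) T := fun ht => ⟨ht.1.le, ht.2.le⟩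
    -- the scalar PDE
    have hpde' : ∀ x ∈ E, ∀ t ∈ Ioo (0:ℝ) T, ∀ z ∈ Ioi (0:ℝ),
        deriv (fun s => (inner ℝ (vp x s z) (bd.normal x) : ℝ)
            + σ * (inner ℝ (vm x s z) (bd.normal x) : ℝ)) t
          = ((ν₁+ν₂)/2 + σ*((ν₁-ν₂)/2)) * deriv (deriv (fun w =>
              (inner ℝ (vp x t w) (bd.normal x) : ℝ)
                + σ * (inner ℝ (vm x t w) (bd.normal x) : ℝ))) z
            - f x t * (z * deriv (fun w => (inner ℝ (vp x t w) (bd.normal x) : ℝ)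
                + σ * (inner ℝ (vm x t w) (bd.normal x) : ℝ)) z) := by
      intro x hx t ht z hz
      have hxc : x ∈ closure E := subset_closure hx
      rw [hUt x t z, hUzz x t z, hUz' x t]
      rcases hcase x with hn1 | hzero
      · have htan : ∀ w : Euc N,
            (inner ℝ (tangPart (bd.normal x) w) (bd.normal x) : ℝ) = 0 := by
          intro w
          simp only [tangPart, inner_sub_left, real_inner_smul_left]
          rw [real_inner_self_eq_norm_mul_norm, hn1]
          ring
        have hcombo : ∀ (c₁ c₂ : ℝ),
            (inner ℝ (iteratedDeriv 2 (fun w => c₁ • vp x t w + c₂ • vm x t w) z)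
              (bd.normal x) : ℝ)
              = c₁ * (inner ℝ (deriv (deriv (fun w => vp x t w)) z) (bd.normal x) : ℝ)
                + c₂ * (inner ℝ (deriv (deriv (fun w => vm x t w)) z) (bd.normal x) : ℝ) := by
          intro c₁ c₂
          rw [iteratedDeriv_succ, iteratedDeriv_one]
          have hD : deriv (fun w => c₁ • vp x t w + c₂ • vm x t w)
              = fun w => c₁ • deriv (fun w' => vp x t w') w
                + c₂ • deriv (fun w' => vm x t w') w := by
            funext w
            exact (((((slice_z_smooth hvps x t).differentiable
                (by simp)) w).hasDerivAt.const_smul c₁).add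
              ((((slice_z_smooth hvms x t).differentiable
                (by simp)) w).hasDerivAt.const_smul c₂)).deriv
          rw [hD]
          have h2 : deriv (fun w => c₁ • deriv (fun w' => vp x t w') w
              + c₂ • deriv (fun w' => vm x t w') w) z = _ :=
            ((((hdiffz vp hvps x t) z).hasDerivAt.const_smul c₁).add
            (((hdiffz vm hvms x t) z).hasDerivAt.const_smul c₂)).deriv
          rw [h2]
          simp [inner_add_left, real_inner_smul_left, Finset.mul_sum, mul_assoc]
        have hp0 := congrArg (fun w : Euc N => (inner ℝ w (bd.normal x) : ℝ))
          (hpdep x hxc t ht z hz)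
        have hm0 := congrArg (fun w : Euc N => (inner ℝ w (bd.normal x) : ℝ))
          (hpdem x hxc t ht z hz)
        simp only [inner_add_left, inner_sub_left, real_inner_smul_left, htan, hμptan, hμmtan,
          hcombo, add_zero] at hp0 hm0
        linear_combination hp0 + σ * hm0
          - ((ν₁-ν₂)/2 * (inner ℝ (deriv (deriv (fun w => vm x t w)) z) (bd.normal x) : ℝ)) * hσ2
      · have e1 : (fun s => vp x s z) = fun _ => (0:Euc N) := funext fun s => (hzero s z).1
        have e2 : (fun s => vm x s z) = fun _ => (0:Euc N) := funext fun s => (hzero s z).2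
        have e3 : (fun w => vp x t w) = fun _ => (0:Euc N) := funext fun w => (hzero t w).1
        have e4 : (fun w => vm x t w) = fun _ => (0:Euc N) := funext fun w => (hzero t w).2
        rw [e1, e2, e3, e4]
        simp [deriv_const']
    -- boundary condition
    have hbc' : ∀ x ∈ E, ∀ t ∈ Ioo (0:ℝ) T,
        deriv (fun w => (inner ℝ (vp x t w) (bd.normal x) : ℝ)
          + σ * (inner ℝ (vm x t w) (bd.normal x) : ℝ)) 0 = 0 := by
      intro x hx t ht
      have hxc : x ∈ closure E := subset_closure hx
      rw [hUz' x t]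
      show (inner ℝ (deriv (fun w => vp x t w) 0) (bd.normal x) : ℝ)
        + σ * (inner ℝ (deriv (fun w => vm x t w) 0) (bd.normal x) : ℝ) = 0
      rw [hbcp x hxc t (hIcc ht), hbcm x hxc t (hIcc ht), hgptan, hgmtan]
      ring
    -- decay
    have hdecay' : ∀ x ∈ E, ∀ t ∈ Ioo (0:ℝ) T,
        Tendsto (fun z => (inner ℝ (vp x t z) (bd.normal x) : ℝ)
          + σ * (inner ℝ (vm x t z) (bd.normal x) : ℝ)) atTop (nhds 0) := by
      intro x hx t ht
      have hxc : x ∈ closure E := subset_closure hx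
      have h1 : Tendsto (fun z => (inner ℝ (vp x t z) (bd.normal x) : ℝ)) atTop
          (nhds (inner ℝ (0:Euc N) (bd.normal x))) :=
        (hdecayp x hxc t (hIcc ht)).inner (tendsto_const_nhds (x := bd.normal x))
      have h2 : Tendsto (fun z => (inner ℝ (vm x t z) (bd.normal x) : ℝ)) atTop
          (nhds (inner ℝ (0:Euc N) (bd.normal x))) :=
        (hdecaym x hxc t (hIcc ht)).inner (tendsto_const_nhds (x := bd.normal x))
      have h3 := h1.add (h2.const_mul σ)
      simpa using h3
    -- initial condition
    have hinit' : ∀ x ∈ E, ∀ z ∈ Ioi (0:ℝ),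
        (inner ℝ (vp x 0 z) (bd.normal x) : ℝ)
          + σ * (inner ℝ (vm x 0 z) (bd.normal x) : ℝ) = 0 := by
      intro x hx z hz
      rw [hinitp x (subset_closure hx) z (mem_Ici.2 (le_of_lt hz)),
        hinitm x (subset_closure hx) z (mem_Ici.2 (le_of_lt hz))]
      simp
    -- wtFn identifications
    have hwt0 : ∀ (v : Euc N → ℝ → ℝ → Euc N) (t : ℝ) (x : Euc N) (z : ℝ),
        wtFn 1 (fun _ => 0) 0 (fun x z => v x t z) x z = (1+z^2) * ‖v x t z‖^2 := by
      intro v t x z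
      rw [wtFn_zero, iteratedDeriv_zero]
    have hwt1 : ∀ (v : Euc N → ℝ → ℝ → Euc N) (t : ℝ) (x : Euc N) (z : ℝ),
        wtFn 1 (fun _ => 0) 1 (fun x z => v x t z) x z
          = (1+z^2) * ‖deriv (fun w => v x t w) z‖^2 := by
      intro v t x z
      rw [wtFn_zero, iteratedDeriv_one]
    have hwt2 : ∀ (v : Euc N → ℝ → ℝ → Euc N) (t : ℝ) (x : Euc N) (z : ℝ),
        wtFn 1 (fun _ => 0) 2 (fun x z => v x t z) x z
          = (1+z^2) * ‖deriv (deriv (fun w => v x t w)) z‖^2 := by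
      intro v t x z
      rw [wtFn_zero, iteratedDeriv_succ, iteratedDeriv_one]
    have hwtd : ∀ (v : Euc N → ℝ → ℝ → Euc N) (t : ℝ) (x : Euc N) (z : ℝ),
        wtFn 0 (fun _ => 0) 0 (fun x z => deriv (fun s => v x s z) t) x z
          = 2 * ‖deriv (fun s => v x s z) t‖^2 := by
      intro v t x z
      rw [wtFn_zero, iteratedDeriv_zero]
      norm_num
    -- continuity helpers
    have hslice3 : ∀ (x : Euc N) (t : ℝ),
        Continuous (fun z : ℝ => ((x, t, z) : Euc N × ℝ × ℝ)) := by
      intro x t; fun_prop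
    have hsq_helper : ∀ (a b c : ℝ), |a| ≤ b + c → a^2 ≤ 2*b^2 + 2*c^2 := by
      intro a b c h
      have h2 : a^2 ≤ (b+c)^2 := by
        rw [← sq_abs]
        exact pow_le_pow_left₀ (abs_nonneg _) h 2
      nlinarith [sq_nonneg (b - c)]
    -- spatial integrability, weight 1
    have hI1' : ∀ x ∈ E, ∀ t ∈ Ioo (0:ℝ) T, IntegrableOn (fun z =>
        (1+z^2) * ((inner ℝ (vp x t z) (bd.normal x) : ℝ)
          + σ * (inner ℝ (vm x t z) (bd.normal x) : ℝ))^2) (Ioi 0) := by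
      intro x hx t ht
      have hip := (((hCV t (hIcc ht)).1) (fun _ => 0) (zero_mem_multiIdx N 1) 0
        (by norm_num)).1 x
      have him := (((hCV t (hIcc ht)).2.2.1) (fun _ => 0) (zero_mem_multiIdx N 1) 0
        (by norm_num)).1 x
      refine ((hip.add him).const_mul 2).mono' ?_ ?_
      · exact ((continuous_const.add (continuous_pow 2)).mul
          ((hUsm.continuous.comp (hslice3 x t)).pow 2)).aestronglyMeasurable
      · filter_upwards [] with z
        have hb := hsq_helper _ _ _ (habs x t z)
        have h1 : (0:ℝ) ≤ 1 + z^2 := by positivity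
        rw [Real.norm_eq_abs, abs_of_nonneg (by positivity)]
        show (1+z^2) * ((inner ℝ (vp x t z) (bd.normal x) : ℝ)
          + σ * (inner ℝ (vm x t z) (bd.normal x) : ℝ))^2
          ≤ 2 * (wtFn 1 (fun _ => 0) 0 (fun x z => vp x t z) x z
            + wtFn 1 (fun _ => 0) 0 (fun x z => vm x t z) x z)
        rw [hwt0 vp t x z, hwt0 vm t x z]
        nlinarith [mul_le_mul_of_nonneg_left hb h1, norm_nonneg (vp x t z),
          norm_nonneg (vm x t z)]
    have hI2' : ∀ x ∈ E, ∀ t ∈ Ioo (0:ℝ) T, IntegrableOn (fun z =>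
        (deriv (fun w => (inner ℝ (vp x t w) (bd.normal x) : ℝ)
          + σ * (inner ℝ (vm x t w) (bd.normal x) : ℝ)) z)^2) (Ioi 0) := by
      intro x hx t ht
      have hip := (((hCV t (hIcc ht)).1) (fun _ => 0) (zero_mem_multiIdx N 1) 1
        (by norm_num)).1 x
      have him := (((hCV t (hIcc ht)).2.2.1) (fun _ => 0) (zero_mem_multiIdx N 1) 1
        (by norm_num)).1 x
      refine ((hip.add him).const_mul 2).mono' ?_ ?_
      · have hc : Continuous (fun z => deriv (fun w =>
            (inner ℝ (vp x t w) (bd.normal x) : ℝ)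
              + σ * (inner ℝ (vm x t w) (bd.normal x) : ℝ)) z) := by
          rw [hUz' x t]
          exact (Continuous.inner (((slice_z_smooth hvps x t).continuous_deriv
              (by exact_mod_cast le_top))) continuous_const).add
            (continuous_const.mul (Continuous.inner
              (((slice_z_smooth hvms x t).continuous_deriv (by exact_mod_cast le_top)))
              continuous_const))
        exact (hc.pow 2).aestronglyMeasurable
      · filter_upwards [] with z
        have hb := hsq_helper _ _ _ (habs_z x t z)
        rw [Real.norm_eq_abs, abs_of_nonneg (sq_nonneg _)]
        show _ ≤ 2 * (wtFn 1 (fun _ => 0) 1 (fun x z => vp x t z) x z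
            + wtFn 1 (fun _ => 0) 1 (fun x z => vm x t z) x z)
        rw [hwt1 vp t x z, hwt1 vm t x z]
        nlinarith [sq_nonneg z, norm_nonneg (deriv (fun w => vp x t w) z),
          norm_nonneg (deriv (fun w => vm x t w) z),
          sq_nonneg (z * ‖deriv (fun w => vp x t w) z‖),
          sq_nonneg (z * ‖deriv (fun w => vm x t w) z‖)]
    have hI3' : ∀ x ∈ E, ∀ t ∈ Ioo (0:ℝ) T, IntegrableOn (fun z =>
        (deriv (deriv (fun w => (inner ℝ (vp x t w) (bd.normal x) : ℝ)
          + σ * (inner ℝ (vm x t w) (bd.normal x) : ℝ))) z)^2) (Ioi 0) := by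
      intro x hx t ht
      have hip := (((hCV t (hIcc ht)).1) (fun _ => 0) (zero_mem_multiIdx N 1) 2
        (by norm_num)).1 x
      have him := (((hCV t (hIcc ht)).2.2.1) (fun _ => 0) (zero_mem_multiIdx N 1) 2
        (by norm_num)).1 x
      refine ((hip.add him).const_mul 2).mono' ?_ ?_
      · have hfun : (fun z => deriv (deriv (fun w =>
            (inner ℝ (vp x t w) (bd.normal x) : ℝ)
              + σ * (inner ℝ (vm x t w) (bd.normal x) : ℝ))) z)
            = fun z => (inner ℝ (deriv (deriv (fun w => vp x t w)) z) (bd.normal x) : ℝ)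
              + σ * (inner ℝ (deriv (deriv (fun w => vm x t w)) z) (bd.normal x) : ℝ) :=
          funext (fun z => hUzz x t z)
        simp only [hUzz]
        have hc1 : Continuous (deriv (deriv (fun w => vp x t w))) :=
          ((contDiff_infty_iff_deriv.1 (slice_z_smooth hvps x t)).2).continuous_deriv
            (by exact_mod_cast le_top)
        have hc2 : Continuous (deriv (deriv (fun w => vm x t w))) :=
          ((contDiff_infty_iff_deriv.1 (slice_z_smooth hvms x t)).2).continuous_deriv
            (by exact_mod_cast le_top)
        exact (((Continuous.inner hc1 continuous_const).add
          (continuous_const.mul (Continuous.inner hc2 continuous_const))).pow 2).aestronglyMeasurable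
      · filter_upwards [] with z
        have hb := hsq_helper _ _ _ (habs_zz x t z)
        rw [Real.norm_eq_abs, abs_of_nonneg (sq_nonneg _)]
        show _ ≤ 2 * (wtFn 1 (fun _ => 0) 2 (fun x z => vp x t z) x z
            + wtFn 1 (fun _ => 0) 2 (fun x z => vm x t z) x z)
        rw [hwt2 vp t x z, hwt2 vm t x z]
        nlinarith [sq_nonneg z, norm_nonneg (deriv (deriv (fun w => vp x t w)) z),
          norm_nonneg (deriv (deriv (fun w => vm x t w)) z),
          sq_nonneg (z * ‖deriv (deriv (fun w => vp x t w)) z‖),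
          sq_nonneg (z * ‖deriv (deriv (fun w => vm x t w)) z‖)]
    have hcontv : ∀ (v : Euc N → ℝ → ℝ → Euc N),
        ContDiff ℝ (⊤:ℕ∞) (fun q : Euc N × ℝ × ℝ => v q.1 q.2.1 q.2.2) →
        ∀ t : ℝ, Continuous (fun p : Euc N × ℝ => v p.1 t p.2) := by
      intro v hv t
      exact hv.continuous.comp
        (by fun_prop : Continuous fun p : Euc N × ℝ => ((p.1, t, p.2) : Euc N × ℝ × ℝ))
    have hP1' : ∀ t ∈ Icc (0:ℝ) T,
        Integrable (fun p : Euc N × ℝ => ((inner ℝ (vp p.1 t p.2) (bd.normal p.1) : ℝ)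
            + σ * (inner ℝ (vm p.1 t p.2) (bd.normal p.1) : ℝ))^2)
          ((volume.restrict E).prod (volume.restrict (Ioi 0))) ∧
        ∫ p : Euc N × ℝ, ((inner ℝ (vp p.1 t p.2) (bd.normal p.1) : ℝ)
            + σ * (inner ℝ (vm p.1 t p.2) (bd.normal p.1) : ℝ))^2
          ∂((volume.restrict E).prod (volume.restrict (Ioi 0))) ≤ 4*CV^2 := by
      intro t ht
      have hwpc : Continuous (fun p : Euc N × ℝ =>
          wtFn 1 (fun _ => 0) 0 (fun x z => vp x t z) p.1 p.2) := by
        have he : (fun p : Euc N × ℝ => wtFn 1 (fun _ => 0) 0 (fun x z => vp x t z) p.1 p.2)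
            = fun p : Euc N × ℝ => (1+p.2^2) * ‖vp p.1 t p.2‖^2 :=
          funext fun p => hwt0 vp t p.1 p.2
        rw [he]
        exact (continuous_const.add (continuous_snd.pow 2)).mul ((hcontv vp hvps t).norm.pow 2)
      have hwmc : Continuous (fun p : Euc N × ℝ =>
          wtFn 1 (fun _ => 0) 0 (fun x z => vm x t z) p.1 p.2) := by
        have he : (fun p : Euc N × ℝ => wtFn 1 (fun _ => 0) 0 (fun x z => vm x t z) p.1 p.2)
            = fun p : Euc N × ℝ => (1+p.2^2) * ‖vm p.1 t p.2‖^2 :=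
          funext fun p => hwt0 vm t p.1 p.2
        rw [he]
        exact (continuous_const.add (continuous_snd.pow 2)).mul ((hcontv vm hvms t).norm.pow 2)
      have hWp := prod_of_iterated hwpc
        (fun x => (((hCV t ht).1) (fun _ => 0) (zero_mem_multiIdx N 1) 0 (by norm_num)).1 x)
        ((((hCV t ht).1) (fun _ => 0) (zero_mem_multiIdx N 1) 0 (by norm_num)).2)
        (fun x z => by rw [hwt0]; positivity)
      have hWm := prod_of_iterated hwmc
        (fun x => (((hCV t ht).2.2.1) (fun _ => 0) (zero_mem_multiIdx N 1) 0 (by norm_num)).1 x)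
        ((((hCV t ht).2.2.1) (fun _ => 0) (zero_mem_multiIdx N 1) 0 (by norm_num)).2)
        (fun x z => by rw [hwt0]; positivity)
      have hbp := hblock (fun x z => vp x t z) 0 (by norm_num) (hCV t ht).2.1
      have hbm := hblock (fun x z => vm x t z) 0 (by norm_num) (hCV t ht).2.2.2.1
      have hdom : Integrable (fun p : Euc N × ℝ =>
          2 * (wtFn 1 (fun _ => 0) 0 (fun x z => vp x t z) p.1 p.2
            + wtFn 1 (fun _ => 0) 0 (fun x z => vm x t z) p.1 p.2))
          ((volume.restrict E).prod (volume.restrict (Ioi 0))) :=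
        (hWp.1.add hWm.1).const_mul 2
      have hptbound : ∀ p : Euc N × ℝ, ((inner ℝ (vp p.1 t p.2) (bd.normal p.1) : ℝ)
            + σ * (inner ℝ (vm p.1 t p.2) (bd.normal p.1) : ℝ))^2
          ≤ 2 * (wtFn 1 (fun _ => 0) 0 (fun x z => vp x t z) p.1 p.2
            + wtFn 1 (fun _ => 0) 0 (fun x z => vm x t z) p.1 p.2) := by
        intro p
        have hb := hsq_helper _ _ _ (habs p.1 t p.2)
        rw [hwt0 vp t p.1 p.2, hwt0 vm t p.1 p.2]
        nlinarith [norm_nonneg (vp p.1 t p.2), norm_nonneg (vm p.1 t p.2),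
          sq_nonneg (p.2 * ‖vp p.1 t p.2‖), sq_nonneg (p.2 * ‖vm p.1 t p.2‖)]
      have humeas : AEStronglyMeasurable (fun p : Euc N × ℝ =>
          ((inner ℝ (vp p.1 t p.2) (bd.normal p.1) : ℝ)
            + σ * (inner ℝ (vm p.1 t p.2) (bd.normal p.1) : ℝ))^2)
          ((volume.restrict E).prod (volume.restrict (Ioi 0))) := by
        refine Continuous.aestronglyMeasurable ?_
        exact (hUsm.continuous.comp
          (by fun_prop : Continuous fun p : Euc N × ℝ =>
            ((p.1, t, p.2) : Euc N × ℝ × ℝ))).pow 2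
      have hUint : Integrable (fun p : Euc N × ℝ =>
          ((inner ℝ (vp p.1 t p.2) (bd.normal p.1) : ℝ)
            + σ * (inner ℝ (vm p.1 t p.2) (bd.normal p.1) : ℝ))^2)
          ((volume.restrict E).prod (volume.restrict (Ioi 0))) :=
        hdom.mono' humeas (Filter.Eventually.of_forall (fun p => by
          rw [Real.norm_eq_abs, abs_of_nonneg (sq_nonneg _)]; exact hptbound p))
      refine ⟨hUint, ?_⟩
      calc ∫ p : Euc N × ℝ, ((inner ℝ (vp p.1 t p.2) (bd.normal p.1) : ℝ)
              + σ * (inner ℝ (vm p.1 t p.2) (bd.normal p.1) : ℝ))^2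
            ∂((volume.restrict E).prod (volume.restrict (Ioi 0)))
          ≤ ∫ p : Euc N × ℝ, 2 * (wtFn 1 (fun _ => 0) 0 (fun x z => vp x t z) p.1 p.2
              + wtFn 1 (fun _ => 0) 0 (fun x z => vm x t z) p.1 p.2)
            ∂((volume.restrict E).prod (volume.restrict (Ioi 0))) :=
            integral_mono hUint hdom hptbound
        _ = 2 * ((∫ p : Euc N × ℝ, wtFn 1 (fun _ => 0) 0 (fun x z => vp x t z) p.1 p.2
              ∂((volume.restrict E).prod (volume.restrict (Ioi 0))))
            + ∫ p : Euc N × ℝ, wtFn 1 (fun _ => 0) 0 (fun x z => vm x t z) p.1 p.2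
              ∂((volume.restrict E).prod (volume.restrict (Ioi 0)))) := by
            rw [MeasureTheory.integral_const_mul, integral_add hWp.1 hWm.1]
        _ ≤ 2 * (CV^2 + CV^2) := by
            rw [hWp.2, hWm.2]
            have := hbp
            have := hbm
            gcongr
        _ = 4*CV^2 := by ring
    have hP2' : ∀ t ∈ Icc (0:ℝ) T,
        Integrable (fun p : Euc N × ℝ => (deriv (fun s =>
            (inner ℝ (vp p.1 s p.2) (bd.normal p.1) : ℝ)
              + σ * (inner ℝ (vm p.1 s p.2) (bd.normal p.1) : ℝ)) t)^2)
          ((volume.restrict E).prod (volume.restrict (Ioi 0))) ∧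
        ∫ p : Euc N × ℝ, (deriv (fun s =>
            (inner ℝ (vp p.1 s p.2) (bd.normal p.1) : ℝ)
              + σ * (inner ℝ (vm p.1 s p.2) (bd.normal p.1) : ℝ)) t)^2
          ∂((volume.restrict E).prod (volume.restrict (Ioi 0))) ≤ 4*CV^2 := by
      intro t ht
      have hcdp : Continuous (fun p : Euc N × ℝ => deriv (fun s => vp p.1 s p.2) t) :=
        (cont_derivt hvps).comp
          (by fun_prop : Continuous fun p : Euc N × ℝ => ((p.1, t, p.2) : Euc N × ℝ × ℝ))
      have hcdm : Continuous (fun p : Euc N × ℝ => deriv (fun s => vm p.1 s p.2) t) :=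
        (cont_derivt hvms).comp
          (by fun_prop : Continuous fun p : Euc N × ℝ => ((p.1, t, p.2) : Euc N × ℝ × ℝ))
      have hwpc : Continuous (fun p : Euc N × ℝ =>
          wtFn 0 (fun _ => 0) 0 (fun x z => deriv (fun s => vp x s z) t) p.1 p.2) := by
        have he : (fun p : Euc N × ℝ =>
            wtFn 0 (fun _ => 0) 0 (fun x z => deriv (fun s => vp x s z) t) p.1 p.2)
            = fun p : Euc N × ℝ => 2 * ‖deriv (fun s => vp p.1 s p.2) t‖^2 :=
          funext fun p => hwtd vp t p.1 p.2
        rw [he]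
        exact continuous_const.mul (hcdp.norm.pow 2)
      have hwmc : Continuous (fun p : Euc N × ℝ =>
          wtFn 0 (fun _ => 0) 0 (fun x z => deriv (fun s => vm x s z) t) p.1 p.2) := by
        have he : (fun p : Euc N × ℝ =>
            wtFn 0 (fun _ => 0) 0 (fun x z => deriv (fun s => vm x s z) t) p.1 p.2)
            = fun p : Euc N × ℝ => 2 * ‖deriv (fun s => vm p.1 s p.2) t‖^2 :=
          funext fun p => hwtd vm t p.1 p.2
        rw [he]
        exact continuous_const.mul (hcdm.norm.pow 2)
      have hWp := prod_of_iterated hwpc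
        (fun x => (((hCV t ht).2.2.2.2.1) (fun _ => 0) (zero_mem_multiIdx N 0) 0
          (by norm_num)).1 x)
        ((((hCV t ht).2.2.2.2.1) (fun _ => 0) (zero_mem_multiIdx N 0) 0 (by norm_num)).2)
        (fun x z => by rw [hwtd]; positivity)
      have hWm := prod_of_iterated hwmc
        (fun x => (((hCV t ht).2.2.2.2.2.2.1) (fun _ => 0) (zero_mem_multiIdx N 0) 0
          (by norm_num)).1 x)
        ((((hCV t ht).2.2.2.2.2.2.1) (fun _ => 0) (zero_mem_multiIdx N 0) 0 (by norm_num)).2)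
        (fun x z => by rw [hwtd]; positivity)
      have hbp := hblock0 (fun x z => deriv (fun s => vp x s z) t) (hCV t ht).2.2.2.2.2.1
      have hbm := hblock0 (fun x z => deriv (fun s => vm x s z) t) (hCV t ht).2.2.2.2.2.2.2
      have hdom : Integrable (fun p : Euc N × ℝ =>
          wtFn 0 (fun _ => 0) 0 (fun x z => deriv (fun s => vp x s z) t) p.1 p.2
            + wtFn 0 (fun _ => 0) 0 (fun x z => deriv (fun s => vm x s z) t) p.1 p.2)
          ((volume.restrict E).prod (volume.restrict (Ioi 0))) := hWp.1.add hWm.1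
      have hptbound : ∀ p : Euc N × ℝ, (deriv (fun s =>
            (inner ℝ (vp p.1 s p.2) (bd.normal p.1) : ℝ)
              + σ * (inner ℝ (vm p.1 s p.2) (bd.normal p.1) : ℝ)) t)^2
          ≤ wtFn 0 (fun _ => 0) 0 (fun x z => deriv (fun s => vp x s z) t) p.1 p.2
            + wtFn 0 (fun _ => 0) 0 (fun x z => deriv (fun s => vm x s z) t) p.1 p.2 := by
        intro p
        have hb := hsq_helper _ _ _ (habs_t p.1 t p.2)
        rw [hwtd vp t p.1 p.2, hwtd vm t p.1 p.2]
        nlinarith [norm_nonneg (deriv (fun s => vp p.1 s p.2) t),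
          norm_nonneg (deriv (fun s => vm p.1 s p.2) t)]
      have humeas : AEStronglyMeasurable (fun p : Euc N × ℝ => (deriv (fun s =>
            (inner ℝ (vp p.1 s p.2) (bd.normal p.1) : ℝ)
              + σ * (inner ℝ (vm p.1 s p.2) (bd.normal p.1) : ℝ)) t)^2)
          ((volume.restrict E).prod (volume.restrict (Ioi 0))) := by
        refine Continuous.aestronglyMeasurable ?_
        have hc := (cont_derivt (u := fun x t z => (inner ℝ (vp x t z) (bd.normal x) : ℝ)
          + σ * (inner ℝ (vm x t z) (bd.normal x) : ℝ)) hUsm).comp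
          (by fun_prop : Continuous fun p : Euc N × ℝ =>
            ((p.1, t, p.2) : Euc N × ℝ × ℝ))
        exact hc.pow 2
      have hUint : Integrable (fun p : Euc N × ℝ => (deriv (fun s =>
            (inner ℝ (vp p.1 s p.2) (bd.normal p.1) : ℝ)
              + σ * (inner ℝ (vm p.1 s p.2) (bd.normal p.1) : ℝ)) t)^2)
          ((volume.restrict E).prod (volume.restrict (Ioi 0))) :=
        hdom.mono' humeas (Filter.Eventually.of_forall (fun p => by
          rw [Real.norm_eq_abs, abs_of_nonneg (sq_nonneg _)]; exact hptbound p))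
      refine ⟨hUint, ?_⟩
      calc ∫ p : Euc N × ℝ, (deriv (fun s =>
              (inner ℝ (vp p.1 s p.2) (bd.normal p.1) : ℝ)
                + σ * (inner ℝ (vm p.1 s p.2) (bd.normal p.1) : ℝ)) t)^2
            ∂((volume.restrict E).prod (volume.restrict (Ioi 0)))
          ≤ ∫ p : Euc N × ℝ,
            (wtFn 0 (fun _ => 0) 0 (fun x z => deriv (fun s => vp x s z) t) p.1 p.2
              + wtFn 0 (fun _ => 0) 0 (fun x z => deriv (fun s => vm x s z) t) p.1 p.2)
            ∂((volume.restrict E).prod (volume.restrict (Ioi 0))) :=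
            integral_mono hUint hdom hptbound
        _ = (∫ p : Euc N × ℝ,
              wtFn 0 (fun _ => 0) 0 (fun x z => deriv (fun s => vp x s z) t) p.1 p.2
              ∂((volume.restrict E).prod (volume.restrict (Ioi 0))))
            + ∫ p : Euc N × ℝ,
              wtFn 0 (fun _ => 0) 0 (fun x z => deriv (fun s => vm x s z) t) p.1 p.2
              ∂((volume.restrict E).prod (volume.restrict (Ioi 0))) :=
            integral_add hWp.1 hWm.1
        _ ≤ CV^2 + CV^2 := by
            rw [hWp.2, hWm.2]
            gcongr
        _ ≤ 4*CV^2 := by nlinarith [sq_nonneg CV]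
    exact key
      (u := fun x t z => (inner ℝ (vp x t z) (bd.normal x) : ℝ)
        + σ * (inner ℝ (vm x t z) (bd.normal x) : ℝ))
      (f := f) (C := 4*CV^2)
      hEo hνpos hT (le_max_right Cf₀ 0) hUsm
      (fun x hx t ht => le_trans (le_trans (le_abs_self _)
        (hCf₀ x (subset_closure hx) t (hIcc ht))) (le_max_left _ _))
      hpde' hbc' hdecay' hinit' hI1' hI2' hI3' hP1' hP2'
  -- combine σ = ±1 and pass to the closure
  have hvp0 : ∀ x ∈ E, ∀ t ∈ Ico (0:ℝ) T, ∀ z ∈ Ioi (0:ℝ),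
      (inner ℝ (vp x t z) (bd.normal x) : ℝ) = 0 ∧
      (inner ℝ (vm x t z) (bd.normal x) : ℝ) = 0 := by
    intro x hx t ht z hz
    have h1 := main 1 (Or.inl rfl) x hx t ht z hz
    have h2 := main (-1) (Or.inr rfl) x hx t ht z hz
    constructor <;> nlinarith [h1, h2]
  have hcont1 : Continuous (fun q : Euc N × ℝ × ℝ =>
      (inner ℝ (vp q.1 q.2.1 q.2.2) (bd.normal q.1) : ℝ)) := (hvps.inner ℝ hnsm').continuous
  have hcont2 : Continuous (fun q : Euc N × ℝ × ℝ =>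
      (inner ℝ (vm q.1 q.2.1 q.2.2) (bd.normal q.1) : ℝ)) := (hvms.inner ℝ hnsm').continuous
  have hEq1 : EqOn (fun q : Euc N × ℝ × ℝ =>
      (inner ℝ (vp q.1 q.2.1 q.2.2) (bd.normal q.1) : ℝ)) (fun _ => 0)
      (E ×ˢ (Ico (0:ℝ) T ×ˢ Ioi (0:ℝ))) := by
    intro q hq
    exact (hvp0 q.1 hq.1 q.2.1 hq.2.1 q.2.2 hq.2.2).1
  have hEq2 : EqOn (fun q : Euc N × ℝ × ℝ =>
      (inner ℝ (vm q.1 q.2.1 q.2.2) (bd.normal q.1) : ℝ)) (fun _ => 0)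
      (E ×ˢ (Ico (0:ℝ) T ×ˢ Ioi (0:ℝ))) := by
    intro q hq
    exact (hvp0 q.1 hq.1 q.2.1 hq.2.1 q.2.2 hq.2.2).2
  have hclos1 := hEq1.closure hcont1 continuous_const
  have hclos2 := hEq2.closure hcont2 continuous_const
  have hsub : (closure E ×ˢ (Icc (0:ℝ) T ×ˢ Ici (0:ℝ)) : Set (Euc N × ℝ × ℝ))
      ⊆ closure (E ×ˢ (Ico (0:ℝ) T ×ˢ Ioi (0:ℝ))) := by
    rw [closure_prod_eq, closure_prod_eq, closure_Ico hT.ne, closure_Ioi]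
  intro x hx t ht z hz
  have hmem : ((x, t, z) : Euc N × ℝ × ℝ)
      ∈ closure (E ×ˢ (Ico (0:ℝ) T ×ˢ Ioi (0:ℝ))) := hsub ⟨hx, ht, hz⟩
  exact ⟨hclos1 hmem, hclos2 hmem⟩
end
end
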